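/- arXiv:math/9812114 — 11 statements merged into one kernel-verified Lean document; each statement's English description precedes it below -/
import Mathlib

section
/- Let S ⊆ κ be a stationary subset of a regular uncountable cardinal κ such that ◊(S) (diamond on S) holds, and let {A_α : α ∈ S} be a family of infinite sets with A_α ⊆ α for each α ∈ S. Then there exist sets B_α ⊆ A_α with |B_α| = |A_α| for all α ∈ S such that the family {B_α : α ∈ S} does not have property B. -/
open Set Cardinal Ordinal

/-- `C` is closed and unbounded in the ordinal `κ`. -/
def IsClubIn (κ : Ordinal.{0}) (C : Set Ordinal.{0}) : Prop :=
  C ⊆ Set.Iio κ ∧ (∀ α < κ, ∃ β ∈ C, α ≤ β) ∧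
    ∀ α < κ, Order.IsSuccLimit α → (∀ β < α, ∃ γ ∈ C, β ≤ γ ∧ γ < α) → α ∈ C

/-- `S` is stationary in the ordinal `κ`. -/
def IsStationaryIn (κ : Ordinal.{0}) (S : Set Ordinal.{0}) : Prop :=
  S ⊆ Set.Iio κ ∧ ∀ C : Set Ordinal, IsClubIn κ C → (S ∩ C).Nonempty

/-- from ◊(S) (witnessed by the sequence `D`) one can shrink any family
`⟨A_α ⊆ α : α ∈ S⟩` of infinite sets to a family `⟨B_α⟩` of the same cardinalities
without property B. -/
theorem stmt1 (κ : Ordinal.{0})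
    (hreg : κ.card.IsRegular) (hord : κ = κ.card.ord) (hunc : ℵ₀ < κ.card)
    (S : Set Ordinal.{0}) (hS : IsStationaryIn κ S)
    (A : Ordinal → Set Ordinal)
    (hAsub : ∀ α ∈ S, A α ⊆ Set.Iio α) (hAinf : ∀ α ∈ S, (A α).Infinite)
    (D : Ordinal → Set Ordinal)
    (hD1 : ∀ α ∈ S, D α ⊆ Set.Iio α)
    (hD2 : ∀ X : Set Ordinal, X ⊆ Set.Iio κ →
      IsStationaryIn κ {α ∈ S | X ∩ Set.Iio α = D α}) :
    ∃ B : Ordinal → Set Ordinal,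
      (∀ α ∈ S, B α ⊆ A α ∧ #↥(B α) = #↥(A α)) ∧
      ¬ ∃ T : Set Ordinal, ∀ α ∈ S, (B α ∩ T).Nonempty ∧ B α ∩ T ≠ B α := by
  classical
  refine ⟨fun α => if #↥(A α ∩ D α) = #↥(A α) then A α ∩ D α else A α \ D α, ?_, ?_⟩
  · intro α hα
    by_cases h : #↥(A α ∩ D α) = #↥(A α)
    · simp only [if_pos h]
      exact ⟨Set.inter_subset_left, h⟩
    · simp only [if_neg h]
      refine ⟨Set.diff_subset, ?_⟩
      have hle : #↥(A α \ D α) ≤ #↥(A α) := Cardinal.mk_le_mk_of_subset Set.diff_subset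
      have hle2 : #↥(A α ∩ D α) ≤ #↥(A α) := Cardinal.mk_le_mk_of_subset Set.inter_subset_left
      have hinf : ℵ₀ ≤ #↥(A α) := by
        have := (hAinf α hα).to_subtype
        exact Cardinal.aleph0_le_mk _
      by_contra hne
      have h1 : #↥(A α ∩ D α) < #↥(A α) := lt_of_le_of_ne hle2 h
      have h2 : #↥(A α \ D α) < #↥(A α) := lt_of_le_of_ne hle hne
      have hun := Cardinal.mk_union_le (A α ∩ D α) (A α \ D α)
      rw [Set.inter_union_diff] at hun
      exact absurd (lt_of_le_of_lt hun (Cardinal.add_lt_of_lt hinf h1 h2)) (lt_irrefl _)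
  · rintro ⟨T, hT⟩
    have hclub : IsClubIn κ (Set.Iio κ) :=
      ⟨subset_rfl, fun α hα => ⟨α, hα, le_rfl⟩, fun α hα _ _ => hα⟩
    obtain ⟨α, hmem, hακ⟩ := (hD2 (T ∩ Set.Iio κ) Set.inter_subset_right).2 _ hclub
    obtain ⟨hαS, hαD⟩ := hmem
    have hsub := hAsub α hαS
    have hATD : A α ∩ T = A α ∩ D α := by
      rw [← hαD]
      ext x
      constructor
      · rintro ⟨hxA, hxT⟩
        exact ⟨hxA, ⟨hxT, Set.mem_Iio.mpr (lt_trans (Set.mem_Iio.mp (hsub hxA)) (Set.mem_Iio.mp hακ))⟩, hsub hxA⟩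
      · rintro ⟨hxA, ⟨hxT, _⟩, _⟩
        exact ⟨hxA, hxT⟩
    obtain ⟨hne, hneq⟩ := hT α hαS
    dsimp only at hne hneq
    by_cases h : #↥(A α ∩ D α) = #↥(A α)
    · rw [if_pos h] at hne hneq
      apply hneq
      apply Set.inter_eq_left.mpr
      intro x hx
      have : x ∈ D α := hx.2
      rw [← hαD] at this
      exact this.1.1
    · rw [if_neg h] at hne hneq
      obtain ⟨x, ⟨hxA, hxD⟩, hxT⟩ := hne
      have : x ∈ A α ∩ D α := hATD ▸ (Set.mem_inter hxA hxT)
      exact hxD this.2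
end

section
/- Let μ be a singular cardinal of cofinality ρ with μ^{<ρ} = μ, where ρ is regular. Define the partial order Q₂ whose elements are pairs ⟨a, A⟩ with a ∈ [μ⁺]^{<ρ} and A ∈ [μ⁺]^{<μ}, ordered by ⟨a, A⟩ ≤ ⟨a', A'⟩ iff a ⊇ a', A ⊇ A', and A' ∩ (a \ a') = ∅. Then Q₂ satisfies the μ⁺-chain condition: every antichain in Q₂ has size at most μ. -/
open Set Cardinal

universe u

/-- The underlying set of the forcing `Q₂ = [μ⁺]^{<ρ} × [μ⁺]^{<μ}` (over a type of size μ⁺). -/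
def Q2 {β : Type u} (ρ μ : Cardinal.{u}) : Set (Set β × Set β) :=
  {p | #↥p.1 < ρ ∧ #↥p.2 < μ}

/-- The ordering of `Q₂`: `⟨a,A⟩ ≤ ⟨a',A'⟩` iff `a ⊇ a'`, `A ⊇ A'` and `A' ∩ (a \ a') = ∅`. -/
def Q2le {β : Type u} (p q : Set β × Set β) : Prop :=
  q.1 ⊆ p.1 ∧ q.2 ⊆ p.2 ∧ q.2 ∩ (p.1 \ q.1) = ∅

namespace Stmt2Aux

theorem exists_rec {I β : Type u} [LinearOrder I] [WellFoundedLT I] (step : Set β → β) :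
    ∃ w : I → β, ∀ t, w t = step (w '' {s | s < t}) := by
  have wf : WellFounded ((· < ·) : I → I → Prop) := wellFounded_lt
  let F : (t : I) → ((s : I) → s < t → β) → β :=
    fun t ih => step {x | ∃ s, ∃ h : s < t, ih s h = x}
  refine ⟨wf.fix F, fun t => ?_⟩
  rw [wf.fix_eq]
  show step _ = step _
  congr 1
  ext x
  simp only [mem_image, mem_setOf_eq]
  constructor
  · rintro ⟨s, hs, rfl⟩; exact ⟨s, hs, rfl⟩
  · rintro ⟨s, hs, rfl⟩; exact ⟨s, hs, rfl⟩

theorem bounded_toType {κ : Cardinal.{u}} (hκ : κ.IsRegular) (S : Set κ.ord.ToType)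
    (hS : #S < κ) : ∃ z, ∀ x ∈ S, x < z := by
  haveI : IsWellOrder κ.ord.ToType (· < ·) := isWellOrder_lt
  have h : Set.Bounded ((· < ·) : κ.ord.ToType → κ.ord.ToType → Prop) S := by
    by_contra hb
    have hc : IsCofinal S := fun a => by
      obtain ⟨b, hb1, hb2⟩ := (not_bounded_iff S).1 hb a
      exact ⟨b, hb1, not_lt.1 hb2⟩
    have := Order.cof_le hc
    rw [Ordinal.cof_toType, hκ.cof_eq] at this
    exact absurd hS (not_lt.2 this)
  exact h

theorem mk_small_subsets {X : Type u} {ρ μ : Cardinal.{u}} (hρ : ρ.IsRegular) (hμ : ℵ₀ ≤ μ)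
    (hρμ : ρ ≤ μ) (hpow : μ ^< ρ = μ) (hX : #X ≤ μ) :
    #{t : Set X // #t < ρ} ≤ μ := by
  haveI : IsWellOrder ρ.ord.ToType (· < ·) := isWellOrder_lt
  set R := ρ.ord.ToType with hR
  have key : ∀ t : {t : Set X // #t < ρ}, ∃ (s : R) (g : {y : R // y < s} → X),
      t.1 = Set.range g := by
    rintro ⟨t, ht⟩
    have h1 : (#↥t).ord < Ordinal.type ((· < ·) : R → R → Prop) := by
      rw [Ordinal.type_toType]
      exact Cardinal.ord_lt_ord.2 ht
    set s : R := Ordinal.enum (· < ·) ⟨(#↥t).ord, h1⟩ with hs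
    have h2 : #{y : R // y < s} = #↥t := by
      have := Ordinal.card_typein (r := ((· < ·) : R → R → Prop)) s
      rw [hs, Ordinal.typein_enum, Cardinal.card_ord] at this
      exact this.symm
    obtain ⟨e⟩ := Cardinal.eq.1 h2
    refine ⟨s, fun y => (e y : X), ?_⟩
    ext x
    simp only [mem_range]
    constructor
    · intro hx
      exact ⟨e.symm ⟨x, hx⟩, by simp⟩
    · rintro ⟨y, rfl⟩
      exact (e y).2
  choose s g hg using key
  have hinj : Function.Injective (fun t : {t : Set X // #t < ρ} =>
      (⟨s t, g t⟩ : Σ s : R, ({y : R // y < s} → X))) := by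
    intro t t' h
    have h2 := congrArg (fun p : Σ s : R, ({y : R // y < s} → X) => Set.range p.2) h
    apply Subtype.ext
    rw [hg t, hg t']
    exact h2
  have hle : #{t : Set X // #t < ρ} ≤ #(Σ s : R, ({y : R // y < s} → X)) := ⟨⟨_, hinj⟩⟩
  refine hle.trans ?_
  rw [Cardinal.mk_sigma]
  have hsum : ∀ s : R, #({y : R // y < s} → X) ≤ μ := by
    intro s
    rw [← Cardinal.power_def]
    have h3 : #{y : R // y < s} < ρ := Cardinal.mk_Iio_ord_toType s
    calc #X ^ #{y : R // y < s} ≤ μ ^ #{y : R // y < s} :=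
          Cardinal.power_le_power_right hX
      _ ≤ μ ^< ρ := Cardinal.le_powerlt μ h3
      _ = μ := hpow
  calc Cardinal.sum (fun s : R => #({y : R // y < s} → X))
      ≤ Cardinal.sum (fun _ : R => μ) := Cardinal.sum_le_sum _ _ hsum
    _ = #R * μ := Cardinal.sum_const' R μ
    _ ≤ μ * μ := by
        apply mul_le_mul' _ le_rfl
        rw [hR, Cardinal.mk_toType, Cardinal.card_ord]
        exact hρμ
    _ = μ := Cardinal.mul_eq_self hμ

/-- The ground type of size `μ⁺`. -/
abbrev Gam (μ : Cardinal.{u}) : Type u := (Order.succ μ).ord.ToType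

set_option maxHeartbeats 1000000 in
theorem core {ρ μ : Cardinal.{u}} (hρ : ρ.IsRegular) (hμ : ℵ₀ ≤ μ)
    (hρμ : ρ ≤ μ) (hpow : μ ^< ρ = μ)
    (𝒜 : Set (Set (Gam μ) × Set (Gam μ)))
    (h𝒜 : 𝒜 ⊆ Q2 ρ μ)
    (hanti : ∀ p ∈ 𝒜, ∀ q ∈ 𝒜, p ≠ q → ¬ ∃ r ∈ Q2 ρ μ, Q2le r p ∧ Q2le r q) :
    #↥𝒜 ≤ μ := by
  classical
  by_contra hcon
  have hνreg : (Order.succ μ).IsRegular := isRegular_succ hμ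
  have hνinf : ℵ₀ ≤ Order.succ μ := hνreg.aleph0_le
  have hμν : μ < Order.succ μ := Order.lt_succ μ
  haveI : IsWellOrder (Gam μ) (· < ·) := isWellOrder_lt
  have hmkΓ : #(Gam μ) = Order.succ μ := by rw [Cardinal.mk_toType, Cardinal.card_ord]
  haveI hne : Nonempty (Gam μ) := by
    rw [← Cardinal.mk_ne_zero_iff, hmkΓ]; exact hνreg.pos.ne'
  have hIio : ∀ x : (Gam μ), #(Iio x) ≤ μ := fun x =>
    Order.lt_succ_iff.1 (Cardinal.mk_Iio_ord_toType x)
  -- arithmetic helpers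
  have hadd : ∀ {c d : Cardinal.{u}}, c ≤ μ → d ≤ μ → c + d ≤ μ := fun hc hd =>
    (add_le_add hc hd).trans (Cardinal.add_eq_self hμ).le
  have hmul : ∀ {c d : Cardinal.{u}}, c ≤ μ → d ≤ μ → c * d ≤ μ := fun hc hd =>
    (mul_le_mul' hc hd).trans (Cardinal.mul_eq_self hμ).le
  -- the family
  have hAle : (Order.succ μ) ≤ #↥𝒜 := Order.succ_le_of_lt (not_le.1 hcon)
  obtain ⟨f⟩ : Nonempty ((Gam μ) ↪ ↥𝒜) := by rw [← Cardinal.le_def, hmkΓ]; exact hAle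
  set a : (Gam μ) → Set (Gam μ) := fun i => (f i : Set (Gam μ) × Set (Gam μ)).1 with ha
  set A : (Gam μ) → Set (Gam μ) := fun i => (f i : Set (Gam μ) × Set (Gam μ)).2 with hA
  have haρ : ∀ i, #(a i) < ρ := fun i => (h𝒜 (f i).2).1
  have hAμ : ∀ i, #(A i) < μ := fun i => (h𝒜 (f i).2).2
  have haμ : ∀ i, #(a i) ≤ μ := fun i => ((haρ i).le.trans hρμ)
  have hbU : ∀ (S : Set (Gam μ)) (B : (Gam μ) → Set (Gam μ)), #S ≤ μ → (∀ x, #(B x) ≤ μ) →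
      #(⋃ x ∈ S, B x) ≤ μ := by
    intro S B hS hB
    refine (Cardinal.mk_biUnion_le B S).trans ?_
    refine hmul hS ?_
    rcases isEmpty_or_nonempty ↥S with h | h
    · rw [ciSup_of_empty]
      exact bot_le
    · exact ciSup_le' fun x => hB (x : (Gam μ))
  have hIic : ∀ x : (Gam μ), #(Iic x) ≤ μ := by
    intro x
    rw [← Set.Iio_insert]
    exact (Cardinal.mk_insert_le).trans (hadd (hIio x) (one_le_aleph0.trans hμ))
  -- ## Step 1: weak Fodor
  have claim1 : ∃ b : (Gam μ), (Order.succ μ) ≤ #{ξ : (Gam μ) | a ξ ∩ Iio ξ ⊆ Iio b} := by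
    by_contra hcl
    push_neg at hcl
    have gdef : ∀ b : (Gam μ), ∃ z : (Gam μ), ∀ ξ : (Gam μ), a ξ ∩ Iio ξ ⊆ Iio b → ξ < z := by
      intro b
      obtain ⟨z, hz⟩ := bounded_toType hνreg _ (hcl b)
      exact ⟨z, fun ξ hξ => hz ξ hξ⟩
    choose g hg using gdef
    set R := ρ.ord.ToType with hR
    haveI : IsWellOrder R (· < ·) := isWellOrder_lt
    haveI : Nonempty R := by
      rw [← Cardinal.mk_ne_zero_iff, hR, Cardinal.mk_toType, Cardinal.card_ord]
      exact hρ.pos.ne'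
    haveI : NoMaxOrder R := Cardinal.noMaxOrder hρ.aleph0_le
    have hmkR : #R = ρ := by rw [hR, Cardinal.mk_toType, Cardinal.card_ord]
    have hIioR : ∀ t : R, #(Iio t) < ρ := fun t => Cardinal.mk_Iio_ord_toType t
    set cl : Set (Gam μ) → Set (Gam μ) := fun S => S ∪ g '' (⋃ x ∈ S, Iic x) with hcldef
    have hclcard : ∀ S : Set (Gam μ), #S ≤ μ → #(cl S) ≤ μ := by
      intro S hS
      refine (Cardinal.mk_union_le _ _).trans (hadd hS ?_)
      exact Cardinal.mk_image_le.trans (hbU S Iic hS hIic)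
    obtain ⟨η, hη⟩ := exists_rec (I := R)
      (fun S => if h : ∃ z : (Gam μ), ∀ x ∈ cl S, x < z then h.choose else Classical.arbitrary (Gam μ))
    have hstep : ∀ t : R, ∀ x ∈ cl (η '' {s | s < t}), x < η t := by
      intro t
      have hcard : #(η '' {s | s < t}) ≤ μ :=
        Cardinal.mk_image_le.trans ((hIioR t).le.trans hρμ)
      have hex : ∃ z : (Gam μ), ∀ x ∈ cl (η '' {s | s < t}), x < z :=
        bounded_toType hνreg _ ((hclcard _ hcard).trans_lt hμν)
      simp only [hη t]
      rw [dif_pos hex]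
      exact hex.choose_spec
    have hmono : ∀ {s t : R}, s < t → η s < η t := fun {s t} h =>
      hstep t (η s) (Set.mem_union_left _ ⟨s, h, rfl⟩)
    obtain ⟨z₀, hz₀⟩ := bounded_toType hνreg (Set.range η)
      ((Cardinal.mk_range_le).trans_lt ((hmkR ▸ hρμ.trans_lt hμν) : #R < (Order.succ μ)))
    set U := {z : (Gam μ) | ∀ t : R, η t < z} with hU
    have hUne : U.Nonempty := ⟨z₀, fun t => hz₀ _ (mem_range_self t)⟩
    have wfΓ : WellFounded ((· < ·) : (Gam μ) → (Gam μ) → Prop) := wellFounded_lt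
    set ξ' := wfΓ.min U hUne with hξ'
    have hξU : ξ' ∈ U := wfΓ.min_mem U hUne
    have hbelow : ∀ x : (Gam μ), x < ξ' → ∃ t : R, x ≤ η t := by
      intro x hx
      by_contra hno
      push_neg at hno
      exact wfΓ.not_lt_min U (hno : x ∈ U) hx
    have hD : #(a ξ' ∩ Iio ξ' : Set (Gam μ)) < ρ :=
      (Cardinal.mk_le_mk_of_subset inter_subset_left).trans_lt (haρ ξ')
    choose sfun hsfun using fun x : ↥(a ξ' ∩ Iio ξ') => hbelow x x.2.2
    obtain ⟨t₀, ht₀⟩ := bounded_toType hρ (Set.range sfun)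
      ((Cardinal.mk_range_le).trans_lt hD)
    have hsub : a ξ' ∩ Iio ξ' ⊆ Iio (η t₀) := by
      rintro x hx
      exact lt_of_le_of_lt (hsfun ⟨x, hx⟩) (hmono (ht₀ _ (mem_range_self (f := sfun) ⟨x, hx⟩)))
    have h1 : ξ' < g (η t₀) := hg (η t₀) ξ' hsub
    obtain ⟨t₁, ht₁⟩ := exists_gt t₀
    have h2 : g (η t₀) < η t₁ := by
      apply hstep t₁
      apply Set.mem_union_right
      exact Set.mem_image_of_mem g
        (Set.mem_biUnion (⟨t₀, ht₁, rfl⟩ : η t₀ ∈ η '' {s | s < t₁}) (Set.mem_Iic.2 le_rfl))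
    exact absurd (h1.trans (h2.trans (hξU t₁))) (lt_irrefl ξ')
  obtain ⟨b, hH⟩ := claim1
  set H := {ξ : (Gam μ) | a ξ ∩ Iio ξ ⊆ Iio b} with hHdef
  -- ## Step 2: pigeonhole on traces
  have hXb : #↥(Iio b) ≤ μ := hIio b
  have hVle : #{t : Set ↥(Iio b) // #t < ρ} ≤ μ := mk_small_subsets hρ hμ hρμ hpow hXb
  have hφdef : ∀ ξ : ↥H, #↥(Subtype.val ⁻¹' (a ξ.1 ∩ Iio ξ.1) : Set ↥(Iio b)) < ρ := by
    intro ξ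
    refine (Cardinal.mk_preimage_of_injective _ _ Subtype.val_injective).trans_lt ?_
    exact (Cardinal.mk_le_mk_of_subset inter_subset_left).trans_lt (haρ ξ.1)
  set φ : ↥H → {t : Set ↥(Iio b) // #t < ρ} :=
    fun ξ => ⟨Subtype.val ⁻¹' (a ξ.1 ∩ Iio ξ.1), hφdef ξ⟩ with hφ
  have hfiber : ∃ v, ¬ #{x : ↥H // φ x = v} ≤ μ := by
    by_contra hall
    push_neg at hall
    have h1 : #↥H ≤ μ := by
      have h0 := Cardinal.mk_congr (Equiv.sigmaFiberEquiv φ)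
      calc #↥H = Cardinal.sum (fun v => #{x : ↥H // φ x = v}) := by
            rw [← h0, Cardinal.mk_sigma]
        _ ≤ Cardinal.sum (fun _ : {t : Set ↥(Iio b) // #t < ρ} => μ) :=
            Cardinal.sum_le_sum _ _ fun v => hall v
        _ = #{t : Set ↥(Iio b) // #t < ρ} * μ := Cardinal.sum_const' _ μ
        _ ≤ μ := hmul hVle le_rfl
    exact absurd (hH.trans h1) (not_le.2 hμν)
  obtain ⟨v₀, hv₀⟩ := hfiber
  have hv₀' : (Order.succ μ) ≤ #{x : ↥H // φ x = v₀} := Order.succ_le_of_lt (not_le.1 hv₀)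
  set r : Set (Gam μ) := Subtype.val '' v₀.1 with hrdef
  set H' := {ξ : (Gam μ) | ξ ∈ H ∧ a ξ ∩ Iio ξ = r} with hH'def
  have hH' : (Order.succ μ) ≤ #↥H' := by
    refine hv₀'.trans ⟨⟨fun x => ⟨x.1.1, x.1.2, ?_⟩, ?_⟩⟩
    · have h1 := congrArg Subtype.val x.2
      have h2 : Subtype.val ⁻¹' (a x.1.1 ∩ Iio x.1.1) = v₀.1 := h1
      have h3 : a x.1.1 ∩ Iio x.1.1 ⊆ range (Subtype.val : ↥(Iio b) → (Gam μ)) := by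
        rw [Subtype.range_coe]
        exact x.1.2
      rw [hrdef, ← h2, Set.image_preimage_eq_of_subset h3]
    · intro x y hxy
      have h1 : (x.1 : Gam μ) = (y.1 : Gam μ) := congrArg (fun q : ↥H' => (q : Gam μ)) hxy
      exact Subtype.ext (Subtype.ext h1)
  have hH'mem : ∀ ξ ∈ H', a ξ ∩ Iio ξ = r := fun ξ h => h.2
  have hrsub : ∀ ξ ∈ H', r ⊆ a ξ := by
    intro ξ h x hx
    rw [← hH'mem ξ h] at hx
    exact hx.1
  -- ## Step 3: thinning
  set J : Set (Gam μ) → Set (Gam μ) := fun S => S ∪ ⋃ x ∈ S, a x with hJdef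
  have hJcard : ∀ S : Set (Gam μ), #S ≤ μ → #(J S) ≤ μ := by
    intro S hS
    exact (Cardinal.mk_union_le _ _).trans (hadd hS (hbU S a hS haμ))
  obtain ⟨w, hw⟩ := exists_rec (I := (Gam μ))
    (fun S => if h : ∃ ξ : (Gam μ), ξ ∈ H' ∧ ∀ x ∈ J S, x < ξ then h.choose else Classical.arbitrary (Gam μ))
  have hwspec : ∀ t : (Gam μ), w t ∈ H' ∧ ∀ x ∈ J (w '' {s | s < t}), x < w t := by
    intro t
    have hcard : #(J (w '' {s | s < t})) ≤ μ :=
      hJcard _ (Cardinal.mk_image_le.trans (hIio t))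
    obtain ⟨z, hz⟩ := bounded_toType hνreg _ (hcard.trans_lt hμν)
    have hex : ∃ ξ : (Gam μ), ξ ∈ H' ∧ ∀ x ∈ J (w '' {s | s < t}), x < ξ := by
      obtain ⟨ξ, hξH', hξz⟩ : ∃ ξ ∈ H', ¬ ξ < z := by
        by_contra hno
        push_neg at hno
        have : H' ⊆ Iio z := fun ξ hξ => hno ξ hξ
        exact absurd (hH'.trans ((Cardinal.mk_le_mk_of_subset this).trans (hIio z)))
          (not_le.2 hμν)
      exact ⟨ξ, hξH', fun x hx => (hz x hx).trans_le (not_lt.1 hξz)⟩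
    simp only [hw t]
    rw [dif_pos hex]
    exact hex.choose_spec
  have hwH' : ∀ t, w t ∈ H' := fun t => (hwspec t).1
  have hwmono : StrictMono w := fun s t h =>
    (hwspec t).2 (w s) (Set.mem_union_left _ ⟨s, h, rfl⟩)
  have hwa : ∀ {s t : (Gam μ)}, s < t → a (w s) ⊆ Iio (w t) := by
    intro s t h x hx
    exact (hwspec t).2 x (Set.mem_union_right _
      (Set.mem_biUnion (⟨s, h, rfl⟩ : w s ∈ w '' {s' | s' < t}) hx))
  have hinterlt : ∀ {i j : (Gam μ)}, i < j → a (w i) ∩ a (w j) = r := by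
    intro i j hij
    apply Subset.antisymm
    · rintro x ⟨hx1, hx2⟩
      rw [← hH'mem _ (hwH' j)]
      exact ⟨hx2, hwa hij hx1⟩
    · intro x hx
      exact ⟨hrsub _ (hwH' i) hx, hrsub _ (hwH' j) hx⟩
  have hinter : ∀ {i j : (Gam μ)}, i ≠ j → a (w i) ∩ a (w j) = r := by
    intro i j hij
    rcases hij.lt_or_gt with h | h
    · exact hinterlt h
    · rw [inter_comm]; exact hinterlt h
  -- ## Step 4: free pair
  set F : (Gam μ) → Set (Gam μ) := fun i => {j | j ≠ i ∧ (A (w i) ∩ (a (w j) \ r)).Nonempty} with hFdef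
  have hF : ∀ i, #(F i) < μ := by
    intro i
    refine lt_of_le_of_lt ?_ (hAμ (w i))
    choose x hx using fun j : ↥(F i) => j.2.2
    refine ⟨⟨fun j => ⟨x j, (hx j).1⟩, ?_⟩⟩
    intro j j' he
    have hxx : x j = x j' := congrArg Subtype.val he
    by_contra hnej
    have hjj : (j : (Gam μ)) ≠ (j' : (Gam μ)) := fun h => hnej (Subtype.ext h)
    have h1 := (hx j).2
    have h2 := (hx j').2
    have hmem : x j ∈ a (w (j : (Gam μ))) ∩ a (w (j' : (Gam μ))) := ⟨h1.1, hxx ▸ h2.1⟩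
    rw [hinter hjj] at hmem
    exact h1.2 hmem
  have hfree : ∃ i j : (Gam μ), i ≠ j ∧ j ∉ F i ∧ i ∉ F j := by
    by_contra htot
    push_neg at htot
    obtain ⟨Y, hY⟩ : ∃ Y : Set (Gam μ), #Y = μ :=
      Cardinal.le_mk_iff_exists_set.1 (by rw [hmkΓ]; exact hμν.le)
    set Z := Y ∪ ⋃ y ∈ Y, F y with hZdef
    have hZc : #Z ≤ μ :=
      (Cardinal.mk_union_le _ _).trans (hadd hY.le (hbU Y F hY.le fun y => (hF y).le))
    obtain ⟨z, hzZ⟩ : ∃ z : (Gam μ), z ∉ Z := by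
      by_contra hno
      push_neg at hno
      have : (univ : Set (Gam μ)) ⊆ Z := fun x _ => hno x
      have h1 : (Order.succ μ) ≤ μ := by
        calc (Order.succ μ) = #(Gam μ) := hmkΓ.symm
          _ = #(univ : Set (Gam μ)) := (Cardinal.mk_univ (α := Gam μ)).symm
          _ ≤ #Z := Cardinal.mk_le_mk_of_subset this
          _ ≤ μ := hZc
      exact absurd h1 (not_le.2 hμν)
    have hYF : Y ⊆ F z := by
      intro y hy
      have hzy : y ≠ z := fun h => hzZ (h ▸ Set.mem_union_left _ hy)
      have h1 : z ∉ F y := fun h => hzZ (Set.mem_union_right _ (Set.mem_biUnion hy h))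
      exact htot y z hzy h1
    have h2 : μ ≤ #(F z) := hY.symm.le.trans (Cardinal.mk_le_mk_of_subset hYF)
    exact absurd (h2.trans_lt (hF z)) (lt_irrefl μ)
  obtain ⟨i, j, hij, hnotij, hnotji⟩ := hfree
  -- ## Step 5: the contradiction
  have hij' : w i ≠ w j := fun h => hij (hwmono.injective h)
  have hpq : (f (w i) : Set (Gam μ) × Set (Gam μ)) ≠ (f (w j) : Set (Gam μ) × Set (Gam μ)) := by
    intro h
    exact hij' (f.injective (Subtype.ext h))
  have he1 : A (w i) ∩ (a (w j) \ r) = ∅ := by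
    rw [← Set.not_nonempty_iff_eq_empty]
    intro hne2
    exact hnotij ⟨hij.symm, hne2⟩
  have he2 : A (w j) ∩ (a (w i) \ r) = ∅ := by
    rw [← Set.not_nonempty_iff_eq_empty]
    intro hne2
    exact hnotji ⟨hij, hne2⟩
  refine hanti _ (f (w i)).2 _ (f (w j)).2 hpq
    ⟨(a (w i) ∪ a (w j), A (w i) ∪ A (w j)), ⟨?_, ?_⟩, ⟨?_, ?_, ?_⟩, ⟨?_, ?_, ?_⟩⟩
  · exact (Cardinal.mk_union_le _ _).trans_lt
      (Cardinal.add_lt_of_lt hρ.aleph0_le (haρ _) (haρ _))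
  · exact (Cardinal.mk_union_le _ _).trans_lt
      (Cardinal.add_lt_of_lt hμ (hAμ _) (hAμ _))
  · exact subset_union_left
  · exact subset_union_left
  · rw [← Set.not_nonempty_iff_eq_empty]
    rintro ⟨x, hxA, hxd⟩
    have hxj : x ∈ a (w j) := hxd.1.resolve_left fun h => hxd.2 h
    have hxr : x ∉ r := fun h => hxd.2 (hrsub _ (hwH' i) h)
    have : x ∈ A (w i) ∩ (a (w j) \ r) := ⟨hxA, hxj, hxr⟩
    rw [he1] at this
    exact this
  · exact subset_union_right
  · exact subset_union_right
  · rw [← Set.not_nonempty_iff_eq_empty]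
    rintro ⟨x, hxA, hxd⟩
    have hxi : x ∈ a (w i) := hxd.1.resolve_right fun h => hxd.2 h
    have hxr : x ∉ r := fun h => hxd.2 (hrsub _ (hwH' j) h)
    have : x ∈ A (w j) ∩ (a (w i) \ r) := ⟨hxA, hxi, hxr⟩
    rw [he2] at this
    exact this

end Stmt2Aux


/-- `Q₂` satisfies the μ⁺-chain condition. -/
theorem stmt2 {β : Type u} (ρ μ : Cardinal.{u})
    (hρ : ρ.IsRegular) (hμ : ℵ₀ ≤ μ) (hsing : ¬ μ.IsRegular) (hcof : μ.ord.cof = ρ)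
    (hpow : μ ^< ρ = μ) (hβ : #β = Order.succ μ)
    (𝒜 : Set (Set β × Set β)) (h𝒜 : 𝒜 ⊆ Q2 ρ μ)
    (hanti : ∀ p ∈ 𝒜, ∀ q ∈ 𝒜, p ≠ q → ¬ ∃ r ∈ Q2 ρ μ, Q2le r p ∧ Q2le r q) :
    #↥𝒜 ≤ μ := by
  classical
  have hρμ : ρ ≤ μ := by rw [← hcof]; exact Ordinal.cof_ord_le μ
  obtain ⟨e⟩ : Nonempty (β ≃ Stmt2Aux.Gam μ) := by
    apply Cardinal.eq.1
    rw [hβ, Cardinal.mk_toType, Cardinal.card_ord]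
  set E : Set β × Set β → Set (Stmt2Aux.Gam μ) × Set (Stmt2Aux.Gam μ) :=
    fun p => (e '' p.1, e '' p.2) with hE
  have hmkim : ∀ s : Set β, #↥(e '' s : Set (Stmt2Aux.Gam μ)) = #↥s := fun s =>
    Cardinal.mk_image_eq e.injective
  have hEinj : Function.Injective E := by
    intro p q h
    have h1 : e '' p.1 = e '' q.1 := congrArg Prod.fst h
    have h2 : e '' p.2 = e '' q.2 := congrArg Prod.snd h
    have := Set.image_injective.2 e.injective
    exact Prod.ext (this h1) (this h2)
  have h𝒜' : E '' 𝒜 ⊆ Q2 ρ μ := by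
    rintro _ ⟨p, hp, rfl⟩
    exact ⟨(hmkim p.1).trans_lt (h𝒜 hp).1, (hmkim p.2).trans_lt (h𝒜 hp).2⟩
  have hanti' : ∀ p ∈ E '' 𝒜, ∀ q ∈ E '' 𝒜, p ≠ q →
      ¬ ∃ r ∈ Q2 ρ μ, Q2le r p ∧ Q2le r q := by
    rintro _ ⟨p, hp, rfl⟩ _ ⟨q, hq, rfl⟩ hne ⟨r', hr'Q2, hr'p, hr'q⟩
    have hpq : p ≠ q := fun h => hne (congrArg E h)
    refine hanti p hp q hq hpq ⟨(e ⁻¹' r'.1, e ⁻¹' r'.2), ⟨?_, ?_⟩, ?_, ?_⟩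
    · exact (Cardinal.mk_preimage_of_injective e r'.1 e.injective).trans_lt hr'Q2.1
    · exact (Cardinal.mk_preimage_of_injective e r'.2 e.injective).trans_lt hr'Q2.2
    · refine ⟨Set.image_subset_iff.1 hr'p.1, Set.image_subset_iff.1 hr'p.2.1, ?_⟩
      rw [← Set.not_nonempty_iff_eq_empty]
      rintro ⟨x, hx2, hx1, hxn⟩
      have : e x ∈ (E p).2 ∩ (r'.1 \ (E p).1) := by
        refine ⟨Set.mem_image_of_mem e hx2, hx1, ?_⟩
        intro hmem
        exact hxn ((e.injective.mem_set_image).1 hmem)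
      rw [hr'p.2.2] at this
      exact this
    · refine ⟨Set.image_subset_iff.1 hr'q.1, Set.image_subset_iff.1 hr'q.2.1, ?_⟩
      rw [← Set.not_nonempty_iff_eq_empty]
      rintro ⟨x, hx2, hx1, hxn⟩
      have : e x ∈ (E q).2 ∩ (r'.1 \ (E q).1) := by
        refine ⟨Set.mem_image_of_mem e hx2, hx1, ?_⟩
        intro hmem
        exact hxn ((e.injective.mem_set_image).1 hmem)
      rw [hr'q.2.2] at this
      exact this
  have hcore := Stmt2Aux.core hρ hμ hρμ hpow (E '' 𝒜) h𝒜' hanti'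
  calc #↥𝒜 = #↥(E '' 𝒜) := (Cardinal.mk_image_eq hEinj).symm
    _ ≤ μ := hcore
end

section
/- Let κ be a regular cardinal, fix a partition {X_ξ : ξ ∈ κ} of κ into κ-many sets of size κ, let B = {B_ξ : ξ ∈ κ} be a family of sets each meeting every X_η in at most one point and forming a Stick(κ, λ, μ)-family restricted to such sets, and set Y_ξ = X_ξ ∪ B_ξ. Then for any set T, if |{ξ ∈ κ : T ∩ Y_ξ = ∅}| < κ, then there is some ξ with |T ∩ Y_ξ| ≥ λ. -/
/-!
Let `E` be the set of indices `η` with `T ∩ X η ≠ ∅`. If `|E| = κ`, a transversal of the `X η`,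
`η ∈ E`, chosen inside `T` has size `κ`, so it contains some `B ξ`, and then `|T ∩ Y ξ| ≥ λ`.
If `|E| < κ` and some `X η` lies inside `T`, then `|T ∩ Y η| ≥ |X η| = κ ≥ λ`. Otherwise a
transversal of all the `X η` can be chosen outside `T`; it contains `κ` many sets `B ξ`, each
disjoint from `T`, and for `ξ ∉ E` this makes `T ∩ Y ξ` empty. So these `κ` many `ξ` lie in
`{ξ | T ∩ Y ξ = ∅} ∪ E`, a union of two sets of size `< κ`, impossible as `κ` is infinite.
-/

open Set Cardinal Function

universe u

section Transversal

variable {α ι S : Type*} {X : ι → Set α} {p : S → ι} {f : S → α}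

theorem index_eq_of_mem_of_pairwise_disjoint (hX : Pairwise (Disjoint on X))
    (hf : ∀ x, f x ∈ X (p x)) {x : S} {η : ι} (h : f x ∈ X η) : p x = η :=
  hX.eq (not_disjoint_iff.2 ⟨f x, hf x, h⟩)

theorem injective_of_mem_of_pairwise_disjoint (hX : Pairwise (Disjoint on X))
    (hp : p.Injective) (hf : ∀ x, f x ∈ X (p x)) : f.Injective := fun _ y hxy =>
  hp (index_eq_of_mem_of_pairwise_disjoint hX hf (hxy ▸ hf y))

theorem mk_range_inter_le_one_of_mem_of_pairwise_disjoint (hX : Pairwise (Disjoint on X))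
    (hp : p.Injective) (hf : ∀ x, f x ∈ X (p x)) (η : ι) : #↥(range f ∩ X η) ≤ 1 := by
  rw [mk_le_one_iff_set_subsingleton]
  rintro _ ⟨⟨x, rfl⟩, hx⟩ _ ⟨⟨y, rfl⟩, hy⟩
  rw [hp ((index_eq_of_mem_of_pairwise_disjoint hX hf hx).trans
    (index_eq_of_mem_of_pairwise_disjoint hX hf hy).symm)]

end Transversal

theorem mk_setOf_subset_range_eq_of_mem_of_pairwise_disjoint {α ι S : Type u} {κ : Cardinal.{u}}
    {X B : ι → Set α} (hX : Pairwise (Disjoint on X))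
    (habs : ∀ H : Set α, #↥H = κ → (∀ η, #↥(H ∩ X η) ≤ 1) → #↥{ξ : ι | B ξ ⊆ H} = κ)
    {p : S → ι} {f : S → α} (hp : p.Injective) (hf : ∀ x, f x ∈ X (p x)) (hS : #S = κ) :
    #↥{ξ : ι | B ξ ⊆ range f} = κ :=
  habs _ (by rw [mk_range_eq f (injective_of_mem_of_pairwise_disjoint hX hp hf), hS])
    (mk_range_inter_le_one_of_mem_of_pairwise_disjoint hX hp hf)

theorem setOf_subset_range_subset_union {α ι : Type*} {X B : ι → Set α} {T : Set α} {g : ι → α}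
    (hgT : ∀ η, g η ∉ T) :
    {ξ | B ξ ⊆ range g} ⊆ {ξ | T ∩ (X ξ ∪ B ξ) = ∅} ∪ {ξ | (T ∩ X ξ).Nonempty} := by
  intro ξ hξ
  refine or_iff_not_imp_right.2 fun hξX => ?_
  show T ∩ (X ξ ∪ B ξ) = ∅
  rw [inter_union_distrib_left, not_nonempty_iff_eq_empty.1 hξX, empty_union,
    eq_empty_iff_forall_notMem]
  rintro _ ⟨haT, haB⟩
  obtain ⟨η, rfl⟩ := hξ haB
  exact hgT η haT

theorem stmt6_general {α ι : Type u} (κ lam : Cardinal.{u})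
    (hκ : κ.IsRegular) (hα : #α = κ) (hι : #ι = κ)
    (X : ι → Set α)
    (hdisj : ∀ ξ η : ι, ξ ≠ η → X ξ ∩ X η = ∅)
    (hXsz : ∀ ξ, #↥(X ξ) = κ)
    (B : ι → Set α)
    (hBsz : ∀ ξ, #↥(B ξ) = lam)
    (habs : ∀ H : Set α, #↥H = κ → (∀ η, #↥(H ∩ X η) ≤ 1) →
      #↥{ξ : ι | B ξ ⊆ H} = κ)
    (Y : ι → Set α) (hY : ∀ ξ, Y ξ = X ξ ∪ B ξ)
    (T : Set α) (hT : #↥{ξ : ι | T ∩ Y ξ = ∅} < κ) :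
    ∃ ξ, lam ≤ #↥(T ∩ Y ξ) := by
  obtain rfl : Y = fun ξ => X ξ ∪ B ξ := funext hY
  have hX : Pairwise (Disjoint on X) := fun ξ η h => disjoint_iff_inter_eq_empty.2 (hdisj ξ η h)
  set E := {η | (T ∩ X η).Nonempty}
  rcases (hι ▸ mk_set_le E : #↥E ≤ κ).lt_or_eq with hE | hE
  · by_cases hfull : ∃ η, X η ⊆ T
    · obtain ⟨η, hη⟩ := hfull
      refine ⟨η, ?_⟩
      calc lam = #↥(B η) := (hBsz η).symm
        _ ≤ #↥(X η) := (mk_set_le _).trans (hα.trans (hXsz η).symm).le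
        _ ≤ #↥(T ∩ (X η ∪ B η)) := mk_le_mk_of_subset fun a ha => ⟨hη ha, Or.inl ha⟩
    · choose g hgX hgT using fun η => not_subset.1 (not_exists.1 hfull η)
      refine absurd ?_ (lt_irrefl κ)
      calc κ = #↥{ξ | B ξ ⊆ range g} :=
            (mk_setOf_subset_range_eq_of_mem_of_pairwise_disjoint hX habs injective_id hgX hι).symm
        _ ≤ #↥({ξ | T ∩ (X ξ ∪ B ξ) = ∅} ∪ E) :=
            mk_le_mk_of_subset (setOf_subset_range_subset_union hgT)
        _ < κ := (mk_union_le _ _).trans_lt (add_lt_of_lt hκ.aleph0_le hT hE)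
  · choose f hfT hfX using fun η : E => η.2
    obtain ⟨ξ, hξ⟩ : {ξ | B ξ ⊆ range f}.Nonempty := by
      rw [← nonempty_coe_sort, ← mk_ne_zero_iff,
        mk_setOf_subset_range_eq_of_mem_of_pairwise_disjoint hX habs Subtype.val_injective hfX hE]
      exact hκ.pos.ne'
    refine ⟨ξ, hBsz ξ ▸ mk_le_mk_of_subset fun b hb => ⟨?_, Or.inr hb⟩⟩
    obtain ⟨η, rfl⟩ := hξ hb
    exact hfT η

/-- the strengthened conclusion in the proof of Lemma 3.2: if `T` misses fewer
than κ-many of the sets `Y_ξ = X_ξ ∪ B_ξ`, then `|T ∩ Y_ξ| ≥ λ` for some ξ. -/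
theorem stmt6 {α ι : Type u} (κ lam μ : Cardinal.{u})
    (hκ : κ.IsRegular) (hα : #α = κ) (hι : #ι = κ)
    (X : ι → Set α)
    (hdisj : ∀ ξ η : ι, ξ ≠ η → X ξ ∩ X η = ∅)
    (hcover : ⋃ ξ, X ξ = Set.univ)
    (hXsz : ∀ ξ, #↥(X ξ) = κ)
    (B : ι → Set α) (hBinj : Function.Injective B)
    (hBsz : ∀ ξ, #↥(B ξ) = lam)
    (hBtr : ∀ ξ η, #↥(B ξ ∩ X η) ≤ 1)
    (had : ∀ ξ η, ξ ≠ η → #↥(B ξ ∩ B η) < μ)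
    (habs : ∀ H : Set α, #↥H = κ → (∀ η, #↥(H ∩ X η) ≤ 1) →
      #↥{ξ : ι | B ξ ⊆ H} = κ)
    (Y : ι → Set α) (hY : ∀ ξ, Y ξ = X ξ ∪ B ξ)
    (T : Set α) (hT : #↥{ξ : ι | T ∩ Y ξ = ∅} < κ) :
    ∃ ξ, lam ≤ #↥(T ∩ Y ξ) :=
  stmt6_general κ lam hκ hα hι X hdisj hXsz B hBsz habs Y hY T hT
end

section
/- Suppose τ < λ ≤ κ, μ, σ are cardinals such that: (1) there exists a μ-almost disjoint family Y ⊆ [κ]^λ with |Y| = κ having no σ-transversal, and (2) every μ-almost disjoint family in [κ]^λ of size κ has a τ⁺-transversal. Then there exists a μ-almost disjoint family Z ⊆ [κ]^τ with |Z| = κ having no σ-transversal. -/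
open Set Cardinal

universe u

open Classical in
noncomputable def nextT {α : Type u} (𝒴 : Set (Set α)) (τ : Cardinal.{u}) (P : Set α) : Set α :=
  if h : ∃ T : Set α, ∀ Y ∈ 𝒴, 0 < #↥((Y \ P) ∩ T) ∧ #↥((Y \ P) ∩ T) < Order.succ τ
  then h.choose \ P else ∅

theorem nextT_disj {α : Type u} (𝒴 : Set (Set α)) (τ : Cardinal.{u}) (P : Set α) :
    nextT 𝒴 τ P ∩ P = ∅ := by
  unfold nextT; split <;> simp [Set.diff_inter_self]

noncomputable def Tseq {α : Type u} (𝒴 : Set (Set α)) (τ : Cardinal.{u}) :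
    Ordinal.{u} → Set α :=
  Ordinal.lt_wf.fix fun i rec => nextT 𝒴 τ (⋃ j : Set.Iio i, rec j j.2)

theorem Tseq_eq {α : Type u} (𝒴 : Set (Set α)) (τ : Cardinal.{u}) (i : Ordinal.{u}) :
    Tseq 𝒴 τ i = nextT 𝒴 τ (⋃ j : Set.Iio i, Tseq 𝒴 τ j) :=
  Ordinal.lt_wf.fix_eq _ i

theorem iUnion_reindex {α : Type u} (i : Ordinal.{u}) (f : Ordinal.{u} → Set α) :
    ⋃ j : Set.Iio i, f j = ⋃ b : i.ToType, f (((Ordinal.ToType.mk (o := i)).symm b : Set.Iio i) : Ordinal) := by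
  ext x
  simp only [Set.mem_iUnion]
  constructor
  · rintro ⟨j, hj⟩
    exact ⟨(Ordinal.ToType.mk (o := i)) j, by simpa using hj⟩
  · rintro ⟨b, hb⟩
    exact ⟨_, hb⟩

/-- the stepping-down lemma: M(κ,λ,μ) ↛ B(σ) together with M(κ,λ,μ) → B(τ⁺)
implies M(κ,τ,μ) ↛ B(σ). -/
theorem stmt7 {α : Type u} (κ lam μ σ τ : Cardinal.{u})
    (hμ : ℵ₀ ≤ μ) (hμτ : μ ≤ τ) (hτlam : τ < lam) (hlamκ : lam ≤ κ) (hα : #α = κ)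
    (h1 : ∃ 𝒴 : Set (Set α), #↥𝒴 = κ ∧ (∀ Y ∈ 𝒴, #↥Y = lam) ∧
      (∀ Y ∈ 𝒴, ∀ Y' ∈ 𝒴, Y ≠ Y' → #↥(Y ∩ Y') < μ) ∧
      ¬ ∃ T : Set α, ∀ Y ∈ 𝒴, 0 < #↥(Y ∩ T) ∧ #↥(Y ∩ T) < σ)
    (h2 : ∀ ℱ : Set (Set α), #↥ℱ = κ → (∀ A ∈ ℱ, #↥A = lam) →
      (∀ A ∈ ℱ, ∀ B ∈ ℱ, A ≠ B → #↥(A ∩ B) < μ) →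
      ∃ T : Set α, ∀ A ∈ ℱ, 0 < #↥(A ∩ T) ∧ #↥(A ∩ T) < Order.succ τ) :
    ∃ 𝒵 : Set (Set α), #↥𝒵 = κ ∧ (∀ Z ∈ 𝒵, #↥Z = τ) ∧
      (∀ Z ∈ 𝒵, ∀ Z' ∈ 𝒵, Z ≠ Z' → #↥(Z ∩ Z') < μ) ∧
      ¬ ∃ T : Set α, ∀ Z ∈ 𝒵, 0 < #↥(Z ∩ T) ∧ #↥(Z ∩ T) < σ := by
  classical
  obtain ⟨𝒴, hYcard, hYsize, hYad, hYno⟩ := h1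
  have hℵτ : ℵ₀ ≤ τ := hμ.trans hμτ
  have hℵlam : ℵ₀ ≤ lam := hℵτ.trans hτlam.le
  have hμlam : μ < lam := hμτ.trans_lt hτlam
  -- the step lemma
  have step : ∀ P : Set α, (∀ Y ∈ 𝒴, #↥(Y ∩ P) ≤ τ) →
      ∀ Y ∈ 𝒴, 0 < #↥(Y ∩ nextT 𝒴 τ P) ∧ #↥(Y ∩ nextT 𝒴 τ P) ≤ τ := by
    intro P hP
    have hdiff : ∀ Y ∈ 𝒴, #↥(Y \ P) = lam := by
      intro Y hY
      have hle : #↥(Y \ P) ≤ lam := by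
        rw [← hYsize Y hY]; exact mk_le_mk_of_subset diff_subset
      rcases lt_or_eq_of_le hle with hlt | heq
      · exfalso
        have hun : (Y \ P) ∪ (Y ∩ P) = Y := Set.diff_union_inter Y P
        have hd : Disjoint (Y \ P) (Y ∩ P) :=
          Set.disjoint_of_subset_right Set.inter_subset_right disjoint_sdiff_left
        have hsum : lam = #↥(Y \ P) + #↥(Y ∩ P) := by
          rw [← mk_union_of_disjoint hd, hun]; exact (hYsize Y hY).symm
        have hlt2 : #↥(Y ∩ P) < lam := lt_of_le_of_lt (hP Y hY) hτlam
        have hfin := Cardinal.add_lt_of_lt hℵlam hlt hlt2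
        rw [← hsum] at hfin
        exact lt_irrefl _ hfin
      · exact heq
    have hinj : Set.InjOn (fun Y => Y \ P) 𝒴 := by
      intro Y hY Y' hY' hEq
      by_contra hne
      have hEq' : Y \ P = Y' \ P := hEq
      have hsub : Y \ P ⊆ Y ∩ Y' := fun x hx =>
        ⟨hx.1, by have hx' : x ∈ Y' \ P := hEq' ▸ hx; exact hx'.1⟩
      have : lam ≤ #↥(Y ∩ Y') := (hdiff Y hY) ▸ mk_le_mk_of_subset hsub
      exact absurd (hYad Y hY Y' hY' hne) (not_lt.2 (hμlam.le.trans this))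
    set ℱ : Set (Set α) := (fun Y => Y \ P) '' 𝒴 with hℱ
    have hFcard : #↥ℱ = κ := by
      rw [hℱ, mk_image_eq_of_injOn _ _ hinj, hYcard]
    have hFsize : ∀ A ∈ ℱ, #↥A = lam := by
      rintro A ⟨Y, hY, rfl⟩; exact hdiff Y hY
    have hFad : ∀ A ∈ ℱ, ∀ B ∈ ℱ, A ≠ B → #↥(A ∩ B) < μ := by
      rintro A ⟨Y, hY, rfl⟩ B ⟨Y', hY', rfl⟩ hne
      have hYne : Y ≠ Y' := fun h => hne (by rw [h])
      refine lt_of_le_of_lt ?_ (hYad Y hY Y' hY' hYne)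
      exact mk_le_mk_of_subset (fun x hx => ⟨hx.1.1, hx.2.1⟩)
    obtain ⟨T, hT⟩ := h2 ℱ hFcard hFsize hFad
    have hex : ∃ T : Set α, ∀ Y ∈ 𝒴, 0 < #↥((Y \ P) ∩ T) ∧ #↥((Y \ P) ∩ T) < Order.succ τ :=
      ⟨T, fun Y hY => hT (Y \ P) ⟨Y, hY, rfl⟩⟩
    intro Y hY
    have hspec := hex.choose_spec Y hY
    have hrw : Y ∩ nextT 𝒴 τ P = (Y \ P) ∩ hex.choose := by
      rw [nextT, dif_pos hex]
      ext x; constructor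
      · rintro ⟨hxY, hxC, hxP⟩; exact ⟨⟨hxY, hxP⟩, hxC⟩
      · rintro ⟨⟨hxY, hxP⟩, hxC⟩; exact ⟨hxY, hxC, hxP⟩
    rw [hrw]
    exact ⟨hspec.1, (Order.lt_succ_iff).1 hspec.2⟩
  set θ : Ordinal.{u} := τ.ord with hθ
  -- cardinality of partial unions
  have hPbound : ∀ i : Ordinal.{u}, i.card ≤ τ →
      (∀ j < i, ∀ Y ∈ 𝒴, #↥(Y ∩ Tseq 𝒴 τ j) ≤ τ) →
      ∀ Y ∈ 𝒴, #↥(Y ∩ ⋃ j : Set.Iio i, Tseq 𝒴 τ j) ≤ τ := by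
    intro i hicard hIH Y hY
    have hre : Y ∩ ⋃ j : Set.Iio i, Tseq 𝒴 τ j
        = ⋃ b : i.ToType, (Y ∩ Tseq 𝒴 τ (((Ordinal.ToType.mk (o := i)).symm b : Set.Iio i) : Ordinal)) := by
      rw [Set.inter_iUnion, iUnion_reindex i (fun j => Y ∩ Tseq 𝒴 τ j)]
    rw [hre]
    refine le_trans mk_iUnion_le_sum_mk ?_
    refine le_trans (Cardinal.sum_le_sum _ (fun _ => τ) ?_) ?_
    · intro b
      exact hIH _ ((Ordinal.ToType.mk (o := i)).symm b).2 Y hY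
    · rw [Cardinal.sum_const', Cardinal.mk_toType]
      calc i.card * τ ≤ τ * τ := mul_le_mul_left hicard τ
        _ = τ := Cardinal.mul_eq_self hℵτ
  -- main invariant
  have main : ∀ i : Ordinal.{u}, i < θ → ∀ Y ∈ 𝒴,
      0 < #↥(Y ∩ Tseq 𝒴 τ i) ∧ #↥(Y ∩ Tseq 𝒴 τ i) ≤ τ := by
    intro i
    induction i using Ordinal.induction with
    | h i IH =>
      intro hiθ
      have hicard : i.card ≤ τ := (Cardinal.lt_ord.1 hiθ).le
      have hbound := hPbound i hicard (fun j hj Y hY =>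
        (IH j hj (hj.trans hiθ) Y hY).2)
      intro Y hY
      rw [Tseq_eq]
      exact step _ hbound Y hY
  -- disjointness of the Tseq's
  have hTdisj : ∀ j i : Ordinal.{u}, j < i → ∀ x, x ∈ Tseq 𝒴 τ j → x ∉ Tseq 𝒴 τ i := by
    intro j i hji x hxj hxi
    have hsub : x ∈ ⋃ k : Set.Iio i, Tseq 𝒴 τ k :=
      Set.mem_iUnion.2 ⟨⟨j, hji⟩, hxj⟩
    have hmem : x ∈ Tseq 𝒴 τ i ∩ ⋃ k : Set.Iio i, Tseq 𝒴 τ k := ⟨hxi, hsub⟩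
    rw [Tseq_eq, nextT_disj] at hmem
    exact hmem
  set U : Set α := ⋃ j : Set.Iio θ, Tseq 𝒴 τ j with hU
  -- upper bound
  have hUub : ∀ Y ∈ 𝒴, #↥(Y ∩ U) ≤ τ := by
    refine hPbound θ ?_ (fun j hj Y hY => (main j hj Y hY).2)
    rw [hθ, Cardinal.card_ord]
  -- lower bound
  have hUlb : ∀ Y ∈ 𝒴, τ ≤ #↥(Y ∩ U) := by
    intro Y hY
    have hpt : ∀ b : θ.ToType, ∃ x, x ∈ Y ∩ Tseq 𝒴 τ (((Ordinal.ToType.mk (o := θ)).symm b : Set.Iio θ) : Ordinal) := by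
      intro b
      have := (main _ (Set.mem_Iio.mp ((Ordinal.ToType.mk (o := θ)).symm b).2) Y hY).1
      obtain ⟨x, hx⟩ := Cardinal.mk_ne_zero_iff.mp this.ne'
      exact ⟨x, hx⟩
    choose f hf using hpt
    have hfU : ∀ b, f b ∈ Y ∩ U := by
      intro b
      refine ⟨(hf b).1, Set.mem_iUnion.2 ⟨(Ordinal.ToType.mk (o := θ)).symm b, (hf b).2⟩⟩
    have hfinj : Function.Injective (fun b => (⟨f b, hfU b⟩ : ↥(Y ∩ U))) := by
      intro b b' hbb'
      by_contra hne
      have heq : f b = f b' := congrArg Subtype.val hbb'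
      have hord : (((Ordinal.ToType.mk (o := θ)).symm b : Set.Iio θ) : Ordinal)
          ≠ (((Ordinal.ToType.mk (o := θ)).symm b' : Set.Iio θ) : Ordinal) := by
        intro h
        exact hne ((Ordinal.ToType.mk (o := θ)).symm.injective (Subtype.ext h))
      rcases lt_or_gt_of_ne hord with h | h
      · exact hTdisj _ _ h (f b) (hf b).2 (heq ▸ (hf b').2)
      · exact hTdisj _ _ h (f b') (hf b').2 (heq ▸ (hf b).2)
    calc τ = θ.card := (Cardinal.card_ord τ).symm
      _ = #θ.ToType := (Cardinal.mk_toType θ).symm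
      _ ≤ #↥(Y ∩ U) := Cardinal.mk_le_of_injective hfinj
  have hUeq : ∀ Y ∈ 𝒴, #↥(Y ∩ U) = τ := fun Y hY => le_antisymm (hUub Y hY) (hUlb Y hY)
  -- the family 𝒵
  have hZinj : Set.InjOn (fun Y => Y ∩ U) 𝒴 := by
    intro Y hY Y' hY' hEq
    by_contra hne
    have hEq' : Y ∩ U = Y' ∩ U := hEq
    have hsub : Y ∩ U ⊆ Y ∩ Y' := fun x hx =>
      ⟨hx.1, by have hx' : x ∈ Y' ∩ U := hEq' ▸ hx; exact hx'.1⟩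
    have : τ ≤ #↥(Y ∩ Y') := (hUeq Y hY) ▸ mk_le_mk_of_subset hsub
    exact absurd (hYad Y hY Y' hY' hne) (not_lt.2 (hμτ.trans this))
  refine ⟨(fun Y => Y ∩ U) '' 𝒴, ?_, ?_, ?_, ?_⟩
  · rw [mk_image_eq_of_injOn _ _ hZinj, hYcard]
  · rintro Z ⟨Y, hY, rfl⟩; exact hUeq Y hY
  · rintro Z ⟨Y, hY, rfl⟩ Z' ⟨Y', hY', rfl⟩ hne
    have hYne : Y ≠ Y' := fun h => hne (by rw [h])
    refine lt_of_le_of_lt ?_ (hYad Y hY Y' hY' hYne)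
    exact mk_le_mk_of_subset (fun x hx => ⟨hx.1.1, hx.2.1⟩)
  · rintro ⟨S, hS⟩
    apply hYno
    refine ⟨S ∩ U, fun Y hY => ?_⟩
    have := hS (Y ∩ U) ⟨Y, hY, rfl⟩
    have hrw : Y ∩ (S ∩ U) = (Y ∩ U) ∩ S := by
      ext x; constructor
      · rintro ⟨h1, h2, h3⟩; exact ⟨⟨h1, h3⟩, h2⟩
      · rintro ⟨⟨h1, h3⟩, h2⟩; exact ⟨h1, h2, h3⟩
    rw [hrw]
    exact this
end

section
/- Let κ be a regular uncountable cardinal and let A ⊆ [κ]^λ be a Stick(κ, λ, μ)-family in which every member A has order type λ (as a set of ordinals). Then the set S_A = {sup A : A ∈ A} is stationary in κ. -/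
open Set Cardinal Ordinal

/-- A set of ordinals below a regular `κ` of cardinality less than `κ` has supremum below `κ`. -/
lemma aux_sup_lt (κ : Ordinal.{0}) (hreg : κ.card.IsRegular) (hord : κ = κ.card.ord)
    (A : Set Ordinal.{0}) (hA : A ⊆ Set.Iio κ) (hcard : #↥A < Cardinal.lift.{1} κ.card) :
    sSup A < κ := by
  have hcof : κ.cof = κ.card := by
    conv_lhs => rw [hord]
    exact hreg.cof_ord
  rw [sSup_eq_iSup']
  apply Ordinal.lift_iSup_lt_of_lt_cof
  · rw [Cardinal.lift_uzero, ← Ordinal.lift_cof, hcof]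
    exact hcard
  · intro i
    exact hA i.2

/-- A club in `κ` has cardinality `κ`. -/
lemma aux_club_card (κ : Ordinal.{0}) (hreg : κ.card.IsRegular) (hord : κ = κ.card.ord)
    (C : Set Ordinal.{0}) (hCsub : C ⊆ Set.Iio κ) (hCub : ∀ α < κ, ∃ β ∈ C, α ≤ β) :
    #↥C = Cardinal.lift.{1} κ.card := by
  refine le_antisymm ?_ ?_
  · calc #↥C ≤ #↥(Set.Iio κ) := mk_le_mk_of_subset hCsub
    _ = Cardinal.lift.{1} κ.card := Cardinal.mk_Iio_ordinal κ
  · by_contra hlt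
    push_neg at hlt
    have hs : sSup C < κ := aux_sup_lt κ hreg hord C hCsub hlt
    have hs' : Order.succ (sSup C) < κ := by
      rw [hord] at hs ⊢
      exact (isSuccLimit_ord hreg.1).succ_lt hs
    obtain ⟨β, hβC, hβ⟩ := hCub _ hs'
    have hbdd : BddAbove C := ⟨κ, fun a ha => le_of_lt (hCsub ha)⟩
    have := le_csSup hbdd hβC
    exact absurd (lt_of_lt_of_le (Order.lt_succ (sSup C)) (hβ.trans this)) (lt_irrefl _)

/-- for a Stick(κ,λ,μ)-family `𝒜` all of whose members have order type λ,
the set `S_𝒜 = {sup A : A ∈ 𝒜}` is stationary in the regular uncountable κ. -/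
theorem stmt8 (κ : Ordinal.{0}) (lam μ : Cardinal.{1})
    (hreg : κ.card.IsRegular) (hord : κ = κ.card.ord) (hunc : ℵ₀ < κ.card)
    (hμ : ℵ₀ ≤ μ) (hμlam : μ ≤ lam) (hlamκ : lam < Cardinal.lift.{1} κ.card)
    (𝒜 : Set (Set Ordinal.{0}))
    (hsub : ∀ A ∈ 𝒜, A ⊆ Set.Iio κ)
    (h𝒜 : #↥𝒜 = Cardinal.lift.{1} κ.card)
    (hsz : ∀ A ∈ 𝒜, #↥A = lam)
    (htp : ∀ A ∈ 𝒜, Ordinal.type (Subrel LT.lt (· ∈ A)) = lam.ord)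
    (had : ∀ A ∈ 𝒜, ∀ B ∈ 𝒜, A ≠ B → #↥(A ∩ B) < μ)
    (hstick : ∀ X : Set Ordinal, X ⊆ Set.Iio κ → #↥X = Cardinal.lift.{1} κ.card →
      ∃ A ∈ 𝒜, A ⊆ X) :
    IsStationaryIn κ {β | ∃ A ∈ 𝒜, sSup A = β} := by
  constructor
  · rintro β ⟨A, hA, rfl⟩
    exact aux_sup_lt κ hreg hord A (hsub A hA) ((hsz A hA) ▸ hlamκ)
  · intro C hC
    obtain ⟨hCsub, hCub, hCcl⟩ := hC
    obtain ⟨A, hA𝒜, hAC⟩ := hstick C hCsub (aux_club_card κ hreg hord C hCsub hCub)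
    have hAsub : A ⊆ Set.Iio κ := hsub A hA𝒜
    have hAne : A.Nonempty := by
      rw [← Set.nonempty_coe_sort, ← Cardinal.mk_ne_zero_iff, hsz A hA𝒜]
      exact (aleph0_pos.trans_le (hμ.trans hμlam)).ne'
    have hsupA : sSup A < κ := aux_sup_lt κ hreg hord A hAsub ((hsz A hA𝒜) ▸ hlamκ)
    have hbdd : BddAbove A := ⟨κ, fun a ha => le_of_lt (hAsub ha)⟩
    refine ⟨sSup A, ⟨A, hA𝒜, rfl⟩, ?_⟩
    by_cases hmax : ∃ m ∈ A, ∀ a ∈ A, a ≤ m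
    · obtain ⟨m, hm, hmb⟩ := hmax
      have : sSup A = m := le_antisymm (csSup_le hAne hmb) (le_csSup hbdd hm)
      exact this ▸ hAC hm
    · push_neg at hmax
      have hlt : ∀ a ∈ A, a < sSup A := by
        intro a ha
        obtain ⟨b, hb, hab⟩ := hmax a ha
        exact lt_of_lt_of_le hab (le_csSup hbdd hb)
      have hlim : Order.IsSuccLimit (sSup A) := by
        obtain ⟨a, ha⟩ := id hAne
        rw [Ordinal.isSuccLimit_iff, Order.isSuccPrelimit_iff_succ_lt]
        constructor
        · exact fun h => absurd (h ▸ hlt a ha) (by simp)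
        · intro b hb
          obtain ⟨c, hc, hbc⟩ := exists_lt_of_lt_csSup hAne hb
          exact lt_of_le_of_lt (Order.succ_le_of_lt hbc) (hlt c hc)
      refine hCcl (sSup A) hsupA hlim ?_
      intro β hβ
      obtain ⟨c, hc, hβc⟩ := exists_lt_of_lt_csSup hAne hβ
      exact ⟨c, hAC hc, le_of_lt hβc, hlt c hc⟩
end

section
/- Let ρ be an infinite regular cardinal and κ a regular cardinal such that λ^ρ < κ for every cardinal λ < κ. Then Stick(κ, ρ⁺, ρ) fails: there is no ρ-almost disjoint family A ⊆ [κ]^{ρ⁺} with |A| = κ such that every X ∈ [κ]^κ contains a member of A. -/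
open Set Cardinal Ordinal

universe u

/-- if κ is regular and λ^ρ < κ for all λ < κ, then Stick(κ,ρ⁺,ρ) fails. -/
theorem stmt9 {α : Type u} (ρ κ : Cardinal.{u})
    (hρ : ρ.IsRegular) (hℵ : ℵ₀ ≤ ρ)
    (hκ : κ.IsRegular) (hα : #α = κ)
    (hpow : ∀ c < κ, c ^ ρ < κ) :
    ¬ ∃ 𝒜 : Set (Set α), #↥𝒜 = κ ∧ (∀ A ∈ 𝒜, #↥A = Order.succ ρ) ∧
      (∀ A ∈ 𝒜, ∀ B ∈ 𝒜, A ≠ B → #↥(A ∩ B) < ρ) ∧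
      (∀ X : Set α, #↥X = κ → ∃ A ∈ 𝒜, A ⊆ X) := by
  rintro ⟨𝒜, -, hsize, had, hstick⟩
  have hκℵ : ℵ₀ ≤ κ := hκ.aleph0_le
  have h2κ : (2 : Cardinal) ^ ρ < κ := hpow 2 ((nat_lt_aleph0 2).trans_le hκℵ)
  have hsuccκ : Order.succ ρ < κ :=
    lt_of_le_of_lt (Order.succ_le_of_lt (cantor ρ)) h2κ
  set T := ρ.ord.ToType with hTdef
  have hTcard : #T = ρ := by rw [hTdef, mk_toType, card_ord]
  set fam : Set α → Set (Set α) := fun S => {A | A ∈ 𝒜 ∧ ρ ≤ #↥(A ∩ S)} with hfamdef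
  set bad : Set α → Set α := fun S => S ∪ ⋃₀ fam S with hbaddef
  -- the family of "dangerous" sets at a stage is small
  have hfam : ∀ S : Set α, #↥S < κ → #↥(fam S) < κ := by
    intro S hS
    have key : ∀ A : ↥(fam S), ∃ g : T → ↥S,
        Function.Injective g ∧ ∀ t, (g t : α) ∈ (A : Set α) := by
      intro A
      have h1 : #T ≤ #↥((A : Set α) ∩ S) := by rw [hTcard]; exact A.2.2
      obtain ⟨e⟩ := (Cardinal.le_def _ _).1 h1
      refine ⟨fun t => ⟨(e t).1, (e t).2.2⟩, ?_, fun t => (e t).2.1⟩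
      intro t t' h
      apply e.injective
      apply Subtype.ext
      have h' := congrArg Subtype.val h
      exact h'
    choose g hginj hgmem using key
    have hΦinj : Function.Injective (fun A : ↥(fam S) => g A) := by
      intro A B hAB
      by_contra hne
      have hne' : (A : Set α) ≠ (B : Set α) := fun h => hne (Subtype.ext h)
      have hlt : #↥((A : Set α) ∩ (B : Set α)) < ρ := had A A.2.1 B B.2.1 hne'
      have hsub : Set.range (fun t => ((g A t : ↥S) : α)) ⊆ (A : Set α) ∩ (B : Set α) := by
        rintro x ⟨t, rfl⟩
        refine ⟨hgmem A t, ?_⟩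
        show ((g A t : ↥S) : α) ∈ (B : Set α)
        have hgt : g A t = g B t := congrFun hAB t
        rw [hgt]
        exact hgmem B t
      have hinjv : Function.Injective (fun t => ((g A t : ↥S) : α)) :=
        fun t t' h => hginj A (Subtype.ext h)
      have : ρ ≤ #↥((A : Set α) ∩ (B : Set α)) := by
        calc ρ = #T := hTcard.symm
        _ = #↥(Set.range (fun t => ((g A t : ↥S) : α))) := (mk_range_eq _ hinjv).symm
        _ ≤ _ := mk_le_mk_of_subset hsub
      exact absurd this hlt.not_ge
    have h2 : #↥(fam S) ≤ #↥S ^ ρ := by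
      have := mk_le_of_injective hΦinj
      rwa [← power_def, hTcard] at this
    exact h2.trans_lt (hpow _ hS)
  -- the "bad" set at each stage is small
  have hbad : ∀ S : Set α, #↥S < κ → #↥(bad S) < κ := by
    intro S hS
    have hsU : #↥(⋃₀ fam S) < κ := by
      refine (mk_sUnion_le _).trans_lt (mul_lt_of_lt hκℵ (hfam S hS) ?_)
      refine iSup_lt_of_isRegular hκ (hfam S hS) ?_
      intro A
      rw [hsize A A.2.1]
      exact hsuccκ
    exact (mk_union_le _ _).trans_lt (add_lt_of_lt hκℵ hS hsU)
  -- we can always choose a point avoiding the bad set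
  have hchoice : ∀ S : Set α, #↥S < κ → ∃ x : α, x ∉ bad S := by
    intro S hS
    by_contra h
    push_neg at h
    have : bad S = Set.univ := eq_univ_of_forall h
    have h2 := hbad S hS
    rw [this, mk_univ, hα] at h2
    exact lt_irrefl _ h2
  -- transfinite recursion of length κ
  set ι := κ.ord.ToType with hιdef
  have wf : WellFounded ((· < ·) : ι → ι → Prop) := wellFounded_lt
  have small_seg : ∀ i : ι, #{j : ι // j < i} < κ := by
    intro i
    exact mk_Iio_ord_toType i
  set F : ∀ i : ι, (∀ j : ι, j < i → α) → α := fun i IH =>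
    (hchoice (Set.range (fun j : {j : ι // j < i} => IH j.1 j.2))
      (mk_range_le.trans_lt (small_seg i))).choose with hFdef
  set f : ι → α := wf.fix F with hfdef
  set S : ι → Set α := fun i => Set.range (fun j : {j : ι // j < i} => f j.1) with hSdef
  have hstep : ∀ i : ι, f i ∉ bad (S i) := by
    intro i
    have h := wf.fix_eq F i
    rw [hfdef, h]
    exact (hchoice (Set.range (fun j : {j : ι // j < i} => f j.1))
      (mk_range_le.trans_lt (small_seg i))).choose_spec
  have hmono : ∀ {j i : ι}, j < i → f j ≠ f i := by
    intro j i hlt he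
    exact hstep i (Or.inl (he ▸ ⟨⟨j, hlt⟩, rfl⟩))
  have hinj : Function.Injective f := by
    intro a b hab
    rcases lt_trichotomy a b with h | h | h
    · exact absurd hab (hmono h)
    · exact h
    · exact absurd hab.symm (hmono h)
  have hXcard : #↥(Set.range f) = κ := by
    rw [mk_range_eq f hinj, hιdef, mk_toType, card_ord]
  obtain ⟨A, hA, hAX⟩ := hstick (Set.range f) hXcard
  set I : Set ι := f ⁻¹' A with hIdef
  have hIcard : #↥I = Order.succ ρ := by
    rw [hIdef, mk_preimage_of_injective_of_subset_range f A hinj hAX, hsize A hA]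
  -- find a point of I with ρ many predecessors in I
  have hρτ : ρ.ord < type ((· < ·) : ↥I → ↥I → Prop) := by
    have h1 : ρ < Order.succ ρ := Order.lt_succ_of_not_isMax
      (fun h => (cantor ρ).not_ge (h (cantor ρ).le))
    have h2 : (Order.succ ρ).ord ≤ type ((· < ·) : ↥I → ↥I → Prop) := by
      rw [Cardinal.ord_le, card_type, hIcard]
    exact lt_of_lt_of_le (Cardinal.ord_lt_ord.2 h1) h2
  set i0 : ↥I := enum ((· < ·) : ↥I → ↥I → Prop) ⟨ρ.ord, hρτ⟩ with hi0def
  have hcard0 : #{b : ↥I // b < i0} = ρ := by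
    have h1 := card_typein (r := ((· < ·) : ↥I → ↥I → Prop)) i0
    rw [show typein ((· < ·) : ↥I → ↥I → Prop) i0 = ρ.ord from typein_enum _ hρτ,
      card_ord] at h1
    exact h1.symm
  set i1 : ι := (i0 : ι) with hi1def
  have hψ : ∀ b : {b : ↥I // b < i0}, f ((b : ↥I) : ι) ∈ A ∩ S i1 := by
    intro b
    refine ⟨(b : ↥I).2, ⟨⟨((b : ↥I) : ι), ?_⟩, rfl⟩⟩
    exact Subtype.coe_lt_coe.2 b.2
  have hge : ρ ≤ #↥(A ∩ S i1) := by
    have hinjψ : Function.Injective (fun b : {b : ↥I // b < i0} =>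
        (⟨f ((b : ↥I) : ι), hψ b⟩ : ↥(A ∩ S i1))) := by
      intro b b' h
      have h1 : f ((b : ↥I) : ι) = f ((b' : ↥I) : ι) := congrArg Subtype.val h
      exact Subtype.ext (Subtype.ext (hinj h1))
    exact hcard0 ▸ mk_le_of_injective hinjψ
  have hmem : f i1 ∈ bad (S i1) := Or.inr ⟨A, ⟨hA, hge⟩, i0.2⟩
  exact hstep i1 hmem
end

section
/- Let ρ be an infinite regular cardinal and κ a regular cardinal such that λ^ρ < κ for all λ < κ. Let A ⊆ [κ]^{ρ⁺} be a ρ-almost disjoint family with tp(A) = ρ⁺ for all A ∈ A. Then S_A = {sup A : A ∈ A} is non-stationary in κ. -/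
open Set Cardinal Ordinal

private lemma sSup_lt_of_small {κ : Ordinal.{0}} {S : Set Ordinal.{0}}
    (hS : S ⊆ Set.Iio κ) (hcard : #↥S < Cardinal.lift.{1} κ.cof) : sSup S < κ := by
  have hκ0 : 0 < κ := by
    rcases eq_zero_or_pos κ with rfl | h
    · rw [Ordinal.cof_zero, Cardinal.lift_zero] at hcard
      exact absurd hcard (Cardinal.zero_le _).not_gt
    · exact h
  rcases S.eq_empty_or_nonempty with rfl | hne
  · rw [csSup_empty]
    exact hκ0
  by_contra hle
  push_neg at hle
  have hub : ∀ α < κ, ∃ b ∈ S, α < b := by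
    intro α hα
    by_contra hb
    push_neg at hb
    exact absurd (csSup_le hne hb) (not_le.2 (hα.trans_le hle))
  let e : Set.Iio κ ≃o κ.ToType := Ordinal.ToType.mk
  set S' : Set κ.ToType := e '' {x : Set.Iio κ | (x : Ordinal) ∈ S} with hS'
  have hmemS : ∀ y : ↥S', ((e.symm (y : κ.ToType) : Set.Iio κ) : Ordinal) ∈ S := by
    rintro ⟨y, x, hx, rfl⟩
    rw [e.symm_apply_apply]
    exact hx
  have hunb : Set.Unbounded (· < ·) S' := by
    intro a
    obtain ⟨b, hbS, hab⟩ := hub (e.symm a) (e.symm a).2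
    refine ⟨e ⟨b, hS hbS⟩, ⟨⟨b, hS hbS⟩, hbS, rfl⟩, ?_⟩
    have : a < e ⟨b, hS hbS⟩ := by
      conv_lhs => rw [← e.apply_symm_apply a]
      rw [e.lt_iff_lt]
      exact hab
    exact asymm this
  have hcof : κ.cof ≤ #↥S' := by
    have := Order.cof_le (s := S') (fun a => let ⟨b, hb, h⟩ := hunb a; ⟨b, hb, not_lt.1 h⟩)
    rwa [Ordinal.cof_toType] at this
  have hinj : Function.Injective (fun y : ↥S' => (⟨_, hmemS y⟩ : ↥S)) := by
    intro y₁ y₂ h12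
    have h0 : ((e.symm (y₁ : κ.ToType) : Set.Iio κ) : Ordinal) =
        ((e.symm (y₂ : κ.ToType) : Set.Iio κ) : Ordinal) := by
      have h3 := congrArg (fun z : ↥S => (z : Ordinal)) h12
      simpa using h3
    apply Subtype.ext
    apply e.symm.injective
    exact Subtype.ext h0
  have hle' : Cardinal.lift.{1} #↥S' ≤ Cardinal.lift.{0} #↥S :=
    Cardinal.lift_mk_le'.2 ⟨⟨_, hinj⟩⟩
  rw [Cardinal.lift_uzero] at hle'
  exact absurd ((Cardinal.lift_le.2 hcof).trans hle') (not_le.2 hcard)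

private lemma card_big_le {ρ : Cardinal.{0}} {𝒜 : Set (Set Ordinal.{0})}
    (had : ∀ A ∈ 𝒜, ∀ B ∈ 𝒜, A ≠ B → #↥(A ∩ B) < Cardinal.lift.{1} ρ) (β : Ordinal.{0}) :
    #↥{A : Set Ordinal.{0} | A ∈ 𝒜 ∧ Cardinal.lift.{1} ρ ≤ #↥(A ∩ Set.Iio β)} ≤
      Cardinal.lift.{1} (β.card ^ ρ) := by
  set T : Set (Set Ordinal.{0}) :=
    {A | A ∈ 𝒜 ∧ Cardinal.lift.{1} ρ ≤ #↥(A ∩ Set.Iio β)} with hT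
  have key : ∀ A : ↥T, ∃ f : ρ.out → ↥(Set.Iio β : Set Ordinal.{0}),
      Set.range (fun i => (f i : Ordinal)) ⊆ ↑A ∩ Set.Iio β ∧
      Cardinal.lift.{1} ρ ≤ #↥(Set.range fun i => (f i : Ordinal)) := by
    rintro ⟨A, hA𝒜, hAbig⟩
    obtain ⟨p, hp, hpcard⟩ := Cardinal.le_mk_iff_exists_subset.mp hAbig
    have hne : Nonempty (ρ.out ≃ ↥p) := by
      rw [← Cardinal.lift_mk_eq', Cardinal.mk_out, Cardinal.lift_uzero, hpcard]
    obtain ⟨e⟩ := hne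
    refine ⟨fun i => ⟨(e i : Ordinal), (hp (e i).2).2⟩, ?_, ?_⟩
    · rintro x ⟨i, rfl⟩
      exact hp (e i).2
    · have hr : (Set.range fun i : ρ.out =>
          ((⟨(e i : Ordinal), (hp (e i).2).2⟩ : ↥(Set.Iio β : Set Ordinal.{0})) : Ordinal)) = p := by
        ext x
        constructor
        · rintro ⟨i, rfl⟩
          exact (e i).2
        · intro hx
          exact ⟨e.symm ⟨x, hx⟩, by simp⟩
      rw [hr, hpcard]
  choose F hF1 hF2 using key
  have hinj : Function.Injective F := by
    intro A A' hFF
    by_contra hne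
    have hneq : (A : Set Ordinal) ≠ (A' : Set Ordinal) := fun h => hne (Subtype.ext h)
    have hlt := had _ A.2.1 _ A'.2.1 hneq
    have hsub : Set.range (fun i => (F A i : Ordinal)) ⊆ (A : Set Ordinal) ∩ (A' : Set Ordinal) := by
      intro x hx
      refine ⟨(hF1 A hx).1, ?_⟩
      rw [hFF] at hx
      exact (hF1 A' hx).1
    exact absurd ((hF2 A).trans (Cardinal.mk_le_mk_of_subset hsub)) (not_le.2 hlt)
  calc #↥T ≤ #(ρ.out → ↥(Set.Iio β : Set Ordinal.{0})) := Cardinal.mk_le_of_injective hinj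
    _ = Cardinal.lift.{0} #↥(Set.Iio β : Set Ordinal.{0}) ^ Cardinal.lift.{1} #ρ.out :=
        Cardinal.mk_arrow _ _
    _ = Cardinal.lift.{1} (β.card ^ ρ) := by
        rw [Cardinal.lift_uzero, Ordinal.mk_Iio_ordinal, Cardinal.mk_out, Cardinal.lift_power]

/-- if λ^ρ < κ for all λ < κ (κ regular) and `𝒜 ⊆ [κ]^{ρ⁺}` is a ρ-almost
disjoint family with all members of order type ρ⁺, then `{sup A : A ∈ 𝒜}` is
non-stationary in κ. -/
theorem stmt10 (κ : Ordinal.{0}) (ρ : Cardinal.{0})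
    (hρ : ρ.IsRegular) (hℵ : ℵ₀ ≤ ρ)
    (hreg : κ.card.IsRegular) (hord : κ = κ.card.ord)
    (hpow : ∀ c < κ.card, c ^ ρ < κ.card)
    (𝒜 : Set (Set Ordinal.{0}))
    (hsub : ∀ A ∈ 𝒜, A ⊆ Set.Iio κ)
    (hsz : ∀ A ∈ 𝒜, #↥A = Cardinal.lift.{1} (Order.succ ρ))
    (htp : ∀ A ∈ 𝒜, Ordinal.type (Subrel LT.lt (· ∈ A)) = (Cardinal.lift.{1} (Order.succ ρ)).ord)
    (had : ∀ A ∈ 𝒜, ∀ B ∈ 𝒜, A ≠ B → #↥(A ∩ B) < Cardinal.lift.{1} ρ) :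
    ∃ C : Set Ordinal, IsClubIn κ C ∧ {β | ∃ A ∈ 𝒜, sSup A = β} ∩ C = ∅ := by
  classical
  -- basic cardinal facts
  have h2κ : (2 : Cardinal) < κ.card :=
    lt_of_lt_of_le (by exact_mod_cast Cardinal.nat_lt_aleph0 2) hreg.aleph0_le
  have hsρκ : Order.succ ρ < κ.card :=
    lt_of_le_of_lt (Order.succ_le_of_lt (Cardinal.cantor ρ)) (hpow 2 h2κ)
  have hρκ : ρ < κ.card := lt_of_le_of_lt (Order.le_succ ρ) hsρκ
  have hℵκ : ℵ₀ < κ.card := lt_of_le_of_lt hℵ hρκ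
  have hcof : κ.cof = κ.card := by
    have h := hreg.cof_eq
    rw [← hord] at h
    exact h
  have hκlim : Order.IsSuccLimit κ := by
    rw [hord]; exact Cardinal.isSuccLimit_ord hreg.aleph0_le
  have hlt : ∀ S : Set Ordinal.{0}, S ⊆ Set.Iio κ → #↥S < Cardinal.lift.{1} κ.card →
      sSup S < κ := by
    intro S h1 h2
    exact sSup_lt_of_small h1 (by rwa [hcof])
  -- sups of members are < κ
  have hsupA : ∀ A ∈ 𝒜, sSup A < κ := by
    intro A hA
    refine hlt A (hsub A hA) ?_
    rw [hsz A hA]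
    exact Cardinal.lift_lt.2 hsρκ
  -- the family of "big at β" members and the bounding functions
  set Big : Ordinal → Set (Set Ordinal.{0}) :=
    fun β => {A | A ∈ 𝒜 ∧ Cardinal.lift.{1} ρ ≤ #↥(A ∩ Set.Iio β)} with hBig
  set h : Ordinal → Ordinal := fun β => sSup (sSup '' Big β) with hh
  have hBigbdd : ∀ β, BddAbove (sSup '' Big β) := by
    intro β
    exact ⟨κ, by rintro x ⟨A, hA, rfl⟩; exact (hsupA A hA.1).le⟩
  have hhκ : ∀ β < κ, h β < κ := by
    intro β hβ
    refine hlt _ (by rintro x ⟨A, hA, rfl⟩; exact hsupA A hA.1) ?_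
    refine lt_of_le_of_lt (Cardinal.mk_image_le) ?_
    refine lt_of_le_of_lt (card_big_le had β) ?_
    exact Cardinal.lift_lt.2 (hpow _ (Cardinal.lt_ord.mp (hord ▸ hβ)))
  have hle_h : ∀ β, ∀ A ∈ Big β, sSup A ≤ h β := by
    intro β A hA
    exact le_csSup (hBigbdd β) ⟨A, hA, rfl⟩
  set H : Ordinal → Ordinal := fun δ => sSup (h '' Set.Iio δ) with hH
  have hHκ : ∀ δ < κ, H δ < κ := by
    intro δ hδ
    refine hlt _ (by rintro x ⟨β, hβ, rfl⟩; exact hhκ β (hβ.trans hδ)) ?_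
    refine lt_of_le_of_lt (Cardinal.mk_image_le) ?_
    rw [Ordinal.mk_Iio_ordinal]
    exact Cardinal.lift_lt.2 (Cardinal.lt_ord.mp (hord ▸ hδ))
  have hle_H : ∀ δ < κ, ∀ β < δ, h β ≤ H δ := by
    intro δ hδ β hβ
    exact le_csSup ⟨κ, by rintro x ⟨β', hβ', rfl⟩; exact (hhκ β' (hβ'.trans hδ)).le⟩ ⟨β, hβ, rfl⟩
  set g : Ordinal → Ordinal :=
    fun δ => max (Order.succ δ) (Order.succ (H (Order.succ δ))) with hg
  have hgκ : ∀ δ < κ, g δ < κ := by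
    intro δ hδ
    exact max_lt (hκlim.succ_lt hδ) (hκlim.succ_lt (hHκ _ (hκlim.succ_lt hδ)))
  have hlt_g : ∀ δ, δ < g δ := fun δ => lt_of_lt_of_le (Order.lt_succ δ) (le_max_left _ _)
  have hh_g : ∀ δ < κ, ∀ β ≤ δ, h β < g δ := by
    intro δ hδ β hβ
    have h1 : h β ≤ H (Order.succ δ) :=
      hle_H _ (hκlim.succ_lt hδ) β (lt_of_le_of_lt hβ (Order.lt_succ δ))
    exact lt_of_le_of_lt h1 (lt_of_lt_of_le (Order.lt_succ _) (le_max_right _ _))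
  -- the club
  set C : Set Ordinal := {γ | γ < κ ∧ Order.IsSuccLimit γ ∧ ∀ β < γ, h β < γ} with hC
  have hAbdd : ∀ A ∈ 𝒜, BddAbove A := fun A hA => ⟨κ, fun y hy => (hsub A hA hy).le⟩
  refine ⟨C, ⟨fun γ hγ => hγ.1, ?_, ?_⟩, ?_⟩
  · -- unbounded
    intro α hα
    set γs : ℕ → Ordinal := fun n => g^[n] (Order.succ α) with hγs
    have hstep : ∀ n, γs (n + 1) = g (γs n) := fun n => Function.iterate_succ_apply' g n _
    have hκn : ∀ n, γs n < κ := by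
      intro n
      induction n with
      | zero => exact hκlim.succ_lt hα
      | succ n ih => rw [hstep]; exact hgκ _ ih
    have hmono : ∀ n, γs n < γs (n + 1) := by
      intro n; rw [hstep]; exact hlt_g _
    have hbdd : BddAbove (Set.range γs) := ⟨κ, by rintro x ⟨n, rfl⟩; exact (hκn n).le⟩
    have hmem : ∀ n, γs n ≤ sSup (Set.range γs) := fun n => le_csSup hbdd ⟨n, rfl⟩
    have hβκ : sSup (Set.range γs) < κ := by
      refine hlt _ (by rintro x ⟨n, rfl⟩; exact hκn n) ?_
      have hr : Cardinal.lift.{0} #↥(Set.range γs) ≤ Cardinal.lift.{1} #ℕ :=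
        Cardinal.mk_range_le_lift
      rw [Cardinal.lift_uzero, Cardinal.mk_nat, Cardinal.lift_aleph0] at hr
      exact lt_of_le_of_lt hr (Cardinal.aleph0_lt_lift.mpr hℵκ)
    have hlt' : ∀ b < sSup (Set.range γs), ∃ n, b < γs n := by
      intro b hb
      obtain ⟨x, ⟨n, rfl⟩, hx⟩ := (lt_csSup_iff hbdd ⟨_, ⟨0, rfl⟩⟩).mp hb
      exact ⟨n, hx⟩
    refine ⟨sSup (Set.range γs), ⟨hβκ, Ordinal.isSuccLimit_iff.mpr ⟨?_, Order.isSuccPrelimit_iff_succ_lt.mpr ?_⟩, ?_⟩,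
      le_trans (Order.le_succ α) (hmem 0)⟩
    · -- ≠ 0
      intro h0
      have := lt_of_lt_of_le (lt_of_le_of_lt (show (0 : Ordinal) ≤ α from zero_le) (Order.lt_succ α)) (hmem 0)
      rw [h0] at this
      exact absurd this (lt_irrefl _)
    · -- succ-closed
      intro b hb
      obtain ⟨n, hbn⟩ := hlt' b hb
      have h1 : Order.succ b ≤ γs (n + 1) :=
        Order.succ_le_of_lt (lt_trans hbn (hmono n))
      exact lt_of_le_of_lt h1 (lt_of_lt_of_le (hmono (n + 1)) (hmem (n + 2)))
    · -- closure point of h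
      intro b hb
      obtain ⟨n, hbn⟩ := hlt' b hb
      have h1 : h b < g (γs n) := hh_g _ (hκn n) b hbn.le
      rw [← hstep n] at h1
      exact lt_of_lt_of_le h1 (hmem (n + 1))
  · -- closed
    intro α hα hlim hcl
    refine ⟨hα, hlim, fun β hβ => ?_⟩
    obtain ⟨γ, hγC, hγ1, hγ2⟩ := hcl (Order.succ β) (hlim.succ_lt hβ)
    exact lt_trans (hγC.2.2 β (lt_of_lt_of_le (Order.lt_succ β) hγ1)) hγ2
  · -- disjointness
    rw [Set.eq_empty_iff_forall_notMem]
    rintro γ ⟨⟨A, hA𝒜, hsupeq⟩, hγC⟩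
    have htyp := htp A hA𝒜
    have hμℵ : ℵ₀ ≤ Cardinal.lift.{1} (Order.succ ρ) :=
      Cardinal.aleph0_le_lift.mpr (hℵ.trans (Order.le_succ ρ))
    have hμlim : Order.IsSuccLimit ((Cardinal.lift.{1} (Order.succ ρ)).ord) := Cardinal.isSuccLimit_ord hμℵ
    have h1 : (Cardinal.lift.{1} ρ).ord < Ordinal.type (Subrel LT.lt (· ∈ A)) := by
      rw [htyp]
      exact Cardinal.ord_lt_ord.2 (Cardinal.lift_lt.2 (Order.lt_succ ρ))
    obtain ⟨a, ha⟩ := Ordinal.typein_surj (Subrel LT.lt (· ∈ A)) h1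
    have h2 : Order.succ ((Cardinal.lift.{1} ρ).ord) < Ordinal.type (Subrel LT.lt (· ∈ A)) := by
      rw [htyp]
      exact hμlim.succ_lt (Cardinal.ord_lt_ord.2 (Cardinal.lift_lt.2 (Order.lt_succ ρ)))
    obtain ⟨a', ha'⟩ := Ordinal.typein_surj (Subrel LT.lt (· ∈ A)) h2
    have haa' : (a : Ordinal) < (a' : Ordinal) := by
      have : Subrel LT.lt (· ∈ A) a a' := by
        rw [← Ordinal.typein_lt_typein (Subrel LT.lt (· ∈ A)), ha, ha']
        exact Order.lt_succ _
      exact this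
    have hxγ : (a : Ordinal) < γ := by
      refine lt_of_lt_of_le haa' ?_
      rw [← hsupeq]
      exact le_csSup (hAbdd A hA𝒜) a'.2
    have hcard : #↥(A ∩ Set.Iio (a : Ordinal)) = Cardinal.lift.{1} ρ := by
      have hct := Ordinal.card_typein (r := Subrel LT.lt (· ∈ A)) a
      rw [ha, Cardinal.card_ord] at hct
      rw [hct]
      refine Cardinal.mk_congr ?_
      exact {
        toFun := fun x => ⟨⟨x.1, x.2.1⟩, x.2.2⟩
        invFun := fun y => ⟨y.1.1, y.1.2, y.2⟩
        left_inv := fun x => rfl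
        right_inv := fun y => rfl }
    have hABig : A ∈ Big (a : Ordinal) := ⟨hA𝒜, hcard.ge⟩
    have hle : sSup A ≤ h (a : Ordinal) := hle_h _ A hABig
    have hlt2 : h (a : Ordinal) < γ := hγC.2.2 _ hxγ
    rw [hsupeq] at hle
    exact absurd (lt_of_le_of_lt hle hlt2) (lt_irrefl γ)
end

section
/- Let ρ be a regular cardinal, κ a regular cardinal with λ^ρ < κ for all λ < κ, and let A be a family of subsets of κ, each of order type ρ + ω, that is ρ-almost disjoint. Then A cannot have the property that every X ∈ [κ]^κ contains a member of A (i.e., Stick(κ, ρ+ω, ρ) fails). -/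
open Set Cardinal Ordinal

namespace Stmt11Aux

noncomputable section

/-- The members of `𝒜` already "committed" to the partial set `Y`:
those whose intersection with `Y` has size at least `ρ`. -/
def committed (𝒜 : Set (Set Ordinal.{0})) (ρ : Cardinal.{0}) (Y : Set Ordinal.{0}) :
    Set (Set Ordinal.{0}) :=
  {A | A ∈ 𝒜 ∧ Cardinal.lift.{1} ρ ≤ #↥(A ∩ Y)}

/-- Forbidden points: the old points together with everything in a committed set. -/
def forb (𝒜 : Set (Set Ordinal.{0})) (ρ : Cardinal.{0}) (Y : Set Ordinal.{0}) :
    Set Ordinal.{0} :=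
  Y ∪ ⋃₀ committed 𝒜 ρ Y

/-- The next point chosen: strictly above every forbidden point. -/
def nxt (𝒜 : Set (Set Ordinal.{0})) (ρ : Cardinal.{0}) (Y : Set Ordinal.{0}) :
    Ordinal.{0} :=
  sSup ((fun x => x + 1) '' forb 𝒜 ρ Y)

/-- The diagonal sequence, defined by transfinite recursion. -/
def F (𝒜 : Set (Set Ordinal.{0})) (ρ : Cardinal.{0}) : Ordinal.{0} → Ordinal.{0} :=
  Ordinal.lt_wf.fix fun α g => nxt 𝒜 ρ {x | ∃ β, ∃ h : β < α, g β h = x}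

theorem F_eq (𝒜 : Set (Set Ordinal.{0})) (ρ : Cardinal.{0}) (α : Ordinal.{0}) :
    F 𝒜 ρ α = nxt 𝒜 ρ (F 𝒜 ρ '' Iio α) := by
  rw [F, WellFounded.fix_eq]
  congr 1
  ext x
  simp only [Set.mem_setOf_eq, Set.mem_image, Set.mem_Iio]
  constructor
  · rintro ⟨β, h, rfl⟩; exact ⟨β, h, rfl⟩
  · rintro ⟨β, h, rfl⟩; exact ⟨β, h, rfl⟩

/-- A supremum of a small (relative to the regular cardinal `κ.card`) set of
ordinals below `κ` stays below `κ`. -/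
theorem sSup_lt {κ : Ordinal.{0}} (hreg : κ.card.IsRegular) (hord : κ = κ.card.ord)
    {S : Set Ordinal.{0}} (hS : S ⊆ Iio κ) (hcard : #↥S < Cardinal.lift.{1} κ.card) :
    sSup S < κ := by
  have hsmall : Small.{0} ↥S := small_subset hS
  let f : Shrink.{0} ↥S → Ordinal.{0} := fun i => ((equivShrink ↥S).symm i : Ordinal)
  have hrange : Set.range f = S := by
    ext x
    constructor
    · rintro ⟨i, rfl⟩; exact ((equivShrink ↥S).symm i).2
    · intro hx; exact ⟨equivShrink ↥S ⟨x, hx⟩, by simp [f]⟩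
  rw [← hrange]
  show iSup f < κ
  rw [hord]
  apply Ordinal.iSup_lt_ord
  · rw [hreg.cof_eq]
    have h1 : Cardinal.lift.{1} #(Shrink.{0} ↥S) = #↥S := lift_mk_shrink'' ↥S
    have : Cardinal.lift.{1} #(Shrink.{0} ↥S) < Cardinal.lift.{1} κ.card := h1 ▸ hcard
    exact_mod_cast Cardinal.lift_lt.1 this
  · intro i
    rw [← hord]
    exact hS ((equivShrink ↥S).symm i).2

/-- `typein` on a subset of ordinals is the order type of an initial chunk. -/
theorem type_inter {A : Set Ordinal.{0}} {a : Ordinal.{0}} (ha : a ∈ A) :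
    Ordinal.type (Subrel (LT.lt : Ordinal → Ordinal → Prop) (· ∈ A ∩ Iio a)) =
      Ordinal.typein (Subrel (LT.lt : Ordinal → Ordinal → Prop) (· ∈ A)) ⟨a, ha⟩ := by
  rw [← type_subrel]
  refine Ordinal.type_eq.2 ⟨⟨⟨?_, ?_, ?_, ?_⟩, ?_⟩⟩
  · exact fun x => ⟨⟨x.1, x.2.1⟩, x.2.2⟩
  · exact fun b => ⟨b.1.1, b.1.2, b.2⟩
  · intro x; rfl
  · intro b; rfl
  · intro x y; exact Iff.rfl

end

end Stmt11Aux

open Stmt11Aux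

/-- if λ^ρ < κ for all λ < κ (κ regular) and `𝒜` is a ρ-almost disjoint family
of subsets of κ each of order type `ρ + ω`, then not every `X ∈ [κ]^κ` contains a member
of `𝒜` (Stick(κ, ρ+ω, ρ) fails). -/
theorem stmt11 (κ : Ordinal.{0}) (ρ : Cardinal.{0})
    (hρ : ρ.IsRegular) (hℵ : ℵ₀ ≤ ρ)
    (hreg : κ.card.IsRegular) (hord : κ = κ.card.ord)
    (hpow : ∀ c < κ.card, c ^ ρ < κ.card)
    (𝒜 : Set (Set Ordinal.{0}))
    (hsub : ∀ A ∈ 𝒜, A ⊆ Set.Iio κ)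
    (h𝒜 : #↥𝒜 = Cardinal.lift.{1} κ.card)
    (htp : ∀ A ∈ 𝒜, Ordinal.type (Subrel LT.lt (· ∈ A)) = Ordinal.lift.{1} ρ.ord + Ordinal.omega0)
    (had : ∀ A ∈ 𝒜, ∀ B ∈ 𝒜, A ≠ B → #↥(A ∩ B) < Cardinal.lift.{1} ρ) :
    ¬ ∀ X : Set Ordinal, X ⊆ Set.Iio κ → #↥X = Cardinal.lift.{1} κ.card →
      ∃ A ∈ 𝒜, A ⊆ X := by
  intro H
  -- basic cardinal facts
  have hℵμ : ℵ₀ ≤ κ.card := hreg.aleph0_le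
  have h2μ : (2 : Cardinal) < κ.card := lt_of_lt_of_le (by exact_mod_cast Cardinal.nat_lt_aleph0 2) hℵμ
  have hρμ : ρ < κ.card := (Cardinal.cantor ρ).trans (hpow 2 h2μ)
  have hℵμ' : ℵ₀ < κ.card := lt_of_le_of_lt hℵ hρμ
  have hlim : Order.IsSuccLimit κ := by rw [hord]; exact Cardinal.isSuccLimit_ord hℵμ
  have hsucclt : ∀ x < κ, x + 1 < κ := by
    intro x hx
    rw [Ordinal.add_one_eq_succ]
    exact hlim.succ_lt hx
  -- every member of the family has cardinality exactly `ρ`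
  have hmem_card : ∀ A ∈ 𝒜, #↥A = Cardinal.lift.{1} ρ := by
    intro A hA
    calc #↥A = (Ordinal.type (Subrel (LT.lt : Ordinal → Ordinal → Prop) (· ∈ A))).card :=
          (Ordinal.card_type _).symm
      _ = (Ordinal.lift.{1} ρ.ord + Ordinal.omega0).card := by rw [htp A hA]
      _ = Cardinal.lift.{1} ρ + ℵ₀ := by
          rw [Ordinal.card_add, Ordinal.card_omega0, ← Ordinal.lift_card, Cardinal.card_ord]
      _ = Cardinal.lift.{1} ρ := by
          rw [Cardinal.add_eq_max (Cardinal.aleph0_le_lift.2 hℵ)]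
          exact max_eq_left (Cardinal.aleph0_le_lift.2 hℵ)
  -- a set of size `ρ` is contained in at most one member of the family
  have huniq : ∀ (S A B : Set Ordinal), S ⊆ A → S ⊆ B → A ∈ 𝒜 → B ∈ 𝒜 →
      Cardinal.lift.{1} ρ ≤ #↥S → A = B := by
    intro S A B hSA hSB hA hB hS
    by_contra hne
    have h1 : Cardinal.lift.{1} ρ ≤ #↥(A ∩ B) :=
      hS.trans (Cardinal.mk_le_mk_of_subset (subset_inter hSA hSB))
    exact absurd (h1.trans_lt (had A hA B hB hne)) (lt_irrefl _)
  -- the forbidden set stays small and below κ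
  have hforb : ∀ Y : Set Ordinal, Y ⊆ Iio κ → #↥Y < Cardinal.lift.{1} κ.card →
      forb 𝒜 ρ Y ⊆ Iio κ ∧ #↥(forb 𝒜 ρ Y) < Cardinal.lift.{1} κ.card := by
    intro Y hYsub hYcard
    have hCsub : committed 𝒜 ρ Y ⊆ 𝒜 := fun A hA => hA.1
    constructor
    · rintro x (hx | ⟨A, hA, hxA⟩)
      · exact hYsub hx
      · exact hsub A (hCsub hA) hxA
    · -- cardinality of the committed family
      have hC : #↥(committed 𝒜 ρ Y) ≤ (max #↥Y ℵ₀) ^ (Cardinal.lift.{1} ρ) := by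
        have hex : ∀ A : committed 𝒜 ρ Y, ∃ S : Set Ordinal,
            S ⊆ A.1 ∩ Y ∧ #↥S = Cardinal.lift.{1} ρ :=
          fun A => Cardinal.le_mk_iff_exists_subset.1 A.2.2
        choose g hg1 hg2 using hex
        have hinj : Function.Injective g := by
          intro A B hAB
          apply Subtype.ext
          refine huniq (g A) A.1 B.1 ((hg1 A).trans inter_subset_left) ?_
            (hCsub A.2) (hCsub B.2) (hg2 A).ge
          rw [hAB]
          exact (hg1 B).trans inter_subset_left
        have h1 : #↥(committed 𝒜 ρ Y) ≤
            #{t : Set Ordinal // t ⊆ Y ∧ #↥t ≤ Cardinal.lift.{1} ρ} := by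
          refine Cardinal.mk_le_of_injective
            (f := fun A => ⟨g A, (hg1 A).trans inter_subset_right, (hg2 A).le⟩) ?_
          intro A B h
          exact hinj (congrArg Subtype.val h)
        exact h1.trans (Cardinal.mk_bounded_subset_le Y _)
      obtain ⟨y, hy, hYy⟩ := Cardinal.lt_lift_iff.1 hYcard
      have hmax : max #↥Y ℵ₀ ≤ Cardinal.lift.{1} (max y ℵ₀) := by
        rw [Cardinal.lift_max, Cardinal.lift_aleph0]
        exact max_le_max hYy.ge le_rfl
      have hpow' : (max y ℵ₀) ^ ρ < κ.card := hpow _ (max_lt hy hℵμ')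
      have hCb : #↥(committed 𝒜 ρ Y) < Cardinal.lift.{1} κ.card := by
        refine lt_of_le_of_lt (hC.trans (Cardinal.power_le_power_right hmax)) ?_
        rw [← Cardinal.lift_power]
        exact Cardinal.lift_lt.2 hpow'
      have hUb : #↥(⋃₀ committed 𝒜 ρ Y) < Cardinal.lift.{1} κ.card := by
        refine lt_of_le_of_lt (Cardinal.mk_sUnion_le _) ?_
        refine Cardinal.mul_lt_of_lt (Cardinal.aleph0_le_lift.2 hℵμ) hCb ?_
        refine lt_of_le_of_lt (ciSup_le' fun s => ?_) (Cardinal.lift_lt.2 hρμ)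
        exact (hmem_card s.1 (hCsub s.2)).le
      exact lt_of_le_of_lt (Cardinal.mk_union_le _ _)
        (Cardinal.add_lt_of_lt (Cardinal.aleph0_le_lift.2 hℵμ) hYcard hUb)
  -- main induction: the sequence stays below κ and dominates all forbidden points
  have main : ∀ α, α < κ →
      F 𝒜 ρ α < κ ∧ ∀ x ∈ forb 𝒜 ρ (F 𝒜 ρ '' Iio α), x < F 𝒜 ρ α := by
    intro α
    induction α using Ordinal.induction with
    | _ α IH =>
      intro hα
      have hYsub : F 𝒜 ρ '' Iio α ⊆ Iio κ := by
        rintro _ ⟨β, hβ, rfl⟩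
        exact (IH β hβ (hβ.trans hα)).1
      have hYcard : #↥(F 𝒜 ρ '' Iio α) < Cardinal.lift.{1} κ.card := by
        refine lt_of_le_of_lt Cardinal.mk_image_le ?_
        rw [Ordinal.mk_Iio_ordinal]
        exact Cardinal.lift_lt.2 (Cardinal.lt_ord.1 (hord ▸ hα))
      obtain ⟨hfsub, hfcard⟩ := hforb _ hYsub hYcard
      have himgsub : ((fun x => x + 1) '' forb 𝒜 ρ (F 𝒜 ρ '' Iio α)) ⊆ Iio κ := by
        rintro _ ⟨x, hx, rfl⟩
        exact hsucclt x (hfsub hx)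
      have himgcard : #↥((fun x => x + 1) '' forb 𝒜 ρ (F 𝒜 ρ '' Iio α)) <
          Cardinal.lift.{1} κ.card := Cardinal.mk_image_le.trans_lt hfcard
      have hsup : nxt 𝒜 ρ (F 𝒜 ρ '' Iio α) < κ := sSup_lt hreg hord himgsub himgcard
      constructor
      · rw [F_eq]; exact hsup
      · intro x hx
        rw [F_eq]
        have hb : BddAbove ((fun x => x + 1) '' forb 𝒜 ρ (F 𝒜 ρ '' Iio α)) :=
          ⟨κ, fun z hz => (himgsub hz).le⟩
        have hle : x + 1 ≤ nxt 𝒜 ρ (F 𝒜 ρ '' Iio α) := le_csSup hb ⟨x, hx, rfl⟩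
        have hxlt : x < x + 1 := by
          rw [Ordinal.add_one_eq_succ]; exact Order.lt_succ x
        exact hxlt.trans_le hle
  -- F is strictly monotone below κ
  have hmono : ∀ β γ, β < γ → γ < κ → F 𝒜 ρ β < F 𝒜 ρ γ := by
    intro β γ h hγ
    exact (main γ hγ).2 (F 𝒜 ρ β) (Or.inl ⟨β, h, rfl⟩)
  -- the diagonal set X
  have hXsub : F 𝒜 ρ '' Iio κ ⊆ Iio κ := by
    rintro _ ⟨β, hβ, rfl⟩
    exact (main β hβ).1
  have hXcard : #↥(F 𝒜 ρ '' Iio κ) = Cardinal.lift.{1} κ.card := by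
    rw [Cardinal.mk_image_eq_of_injOn]
    · exact Ordinal.mk_Iio_ordinal κ
    · intro β hβ γ hγ h
      rcases lt_trichotomy β γ with hlt | heq | hlt
      · exact absurd h (hmono β γ hlt hγ).ne
      · exact heq
      · exact absurd h.symm (hmono γ β hlt hβ).ne
  obtain ⟨A, hA, hAX⟩ := H (F 𝒜 ρ '' Iio κ) hXsub hXcard
  -- find the element of A at position ρ
  have hlt : Ordinal.lift.{1} ρ.ord <
      Ordinal.type (Subrel (LT.lt : Ordinal → Ordinal → Prop) (· ∈ A)) := by
    rw [htp A hA]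
    calc Ordinal.lift.{1} ρ.ord = Ordinal.lift.{1} ρ.ord + 0 := (add_zero _).symm
      _ < Ordinal.lift.{1} ρ.ord + Ordinal.omega0 :=
          add_lt_add_right Ordinal.omega0_pos _
  obtain ⟨⟨a, haA⟩, ha⟩ := Ordinal.typein_surj _ hlt
  have htypeinter :
      Ordinal.type (Subrel (LT.lt : Ordinal → Ordinal → Prop) (· ∈ A ∩ Iio a)) =
        Ordinal.lift.{1} ρ.ord := by
    rw [type_inter haA, ha]
  have hcardinter : #↥(A ∩ Iio a) = Cardinal.lift.{1} ρ := by
    rw [← Ordinal.card_type (Subrel (LT.lt : Ordinal → Ordinal → Prop) (· ∈ A ∩ Iio a)),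
      htypeinter, ← Ordinal.lift_card, Cardinal.card_ord]
  obtain ⟨γ, hγ, rfl⟩ := hAX haA
  -- the initial chunk of A below F γ lies inside the image of Iio γ
  have hsubY : A ∩ Iio (F 𝒜 ρ γ) ⊆ A ∩ (F 𝒜 ρ '' Iio γ) := by
    rintro x ⟨hxA, hxlt⟩
    simp only [Set.mem_Iio] at hxlt
    obtain ⟨β, hβ, rfl⟩ := hAX hxA
    refine ⟨hxA, β, ?_, rfl⟩
    simp only [Set.mem_Iio]
    by_contra hle
    push_neg at hle
    rcases eq_or_lt_of_le hle with heq | hlt'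
    · rw [heq] at hxlt; exact lt_irrefl _ hxlt
    · exact absurd (hmono γ β hlt' hβ) (asymm hxlt)
  have hcommitted : A ∈ committed 𝒜 ρ (F 𝒜 ρ '' Iio γ) := by
    refine ⟨hA, ?_⟩
    rw [← hcardinter]
    exact Cardinal.mk_le_mk_of_subset hsubY
  have hforbid : F 𝒜 ρ γ ∈ forb 𝒜 ρ (F 𝒜 ρ '' Iio γ) := Or.inr ⟨A, hcommitted, haA⟩
  exact lt_irrefl _ ((main γ hγ).2 _ hforbid)
end

section
/- Let κ be a regular cardinal and A a stationary family assignment: for each α in a stationary S ⊆ κ of points of cofinality ρ⁺, A_α ⊆ α with |A_α| = ρ⁺ and the family {A_α : α ∈ S} is ρ-almost disjoint. If ◊(S) holds, then M(κ, ρ⁺, ρ) ↛ B: there is a ρ-almost disjoint family in [κ]^{ρ⁺} of size κ without property B. -/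
open Set Cardinal Ordinal

/-- from a stationary `S ⊆ S^κ_{ρ⁺}` with ◊(S) (witnessed by `D`) and a
ρ-almost disjoint assignment `A_α ∈ [α]^{ρ⁺}` one gets M(κ,ρ⁺,ρ) ↛ B. -/
theorem stmt12 (κ : Ordinal.{0}) (ρ : Cardinal.{0})
    (hρ : ρ.IsRegular)
    (hreg : κ.card.IsRegular) (hord : κ = κ.card.ord)
    (hρκ : (Order.succ ρ).ord < κ)
    (S : Set Ordinal) (hS : IsStationaryIn κ S)
    (hScof : ∀ α ∈ S, α.cof = Order.succ ρ)
    (A : Ordinal → Set Ordinal)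
    (hAsub : ∀ α ∈ S, A α ⊆ Set.Iio α)
    (hAsz : ∀ α ∈ S, #↥(A α) = Cardinal.lift.{1} (Order.succ ρ))
    (had : ∀ α ∈ S, ∀ β ∈ S, α ≠ β → #↥(A α ∩ A β) < Cardinal.lift.{1} ρ)
    (D : Ordinal → Set Ordinal) (hD1 : ∀ α ∈ S, D α ⊆ Set.Iio α)
    (hD2 : ∀ X : Set Ordinal, X ⊆ Set.Iio κ →
      IsStationaryIn κ {α ∈ S | X ∩ Set.Iio α = D α}) :
    ∃ ℬ : Set (Set Ordinal.{0}),
      #↥ℬ = Cardinal.lift.{1} κ.card ∧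
      (∀ B ∈ ℬ, B ⊆ Set.Iio κ ∧ #↥B = Cardinal.lift.{1} (Order.succ ρ)) ∧
      (∀ B ∈ ℬ, ∀ B' ∈ ℬ, B ≠ B' → #↥(B ∩ B') < Cardinal.lift.{1} ρ) ∧
      ¬ ∃ T : Set Ordinal, ∀ B ∈ ℬ, (B ∩ T).Nonempty ∧ B ∩ T ≠ B := by
  classical
  have hκ0 : S ⊆ Set.Iio κ := hS.1
  have hsucc : (Order.succ ρ).IsRegular := isRegular_succ hρ.aleph0_le
  have hℵ : (ℵ₀ : Cardinal.{1}) ≤ Cardinal.lift.{1} (Order.succ ρ) :=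
    Cardinal.aleph0_le_lift.2 hsucc.aleph0_le
  have hκlim : Order.IsSuccLimit κ := by rw [hord]; exact Cardinal.isSuccLimit_ord hreg.aleph0_le
  -- choice of pieces B α ⊆ A α
  have hchoice : ∀ α ∈ S, ∃ B : Set Ordinal, B ⊆ A α ∧
      #↥B = Cardinal.lift.{1} (Order.succ ρ) ∧ (B ⊆ D α ∨ B ∩ D α = ∅) := by
    intro α hα
    by_cases h1 : #↥(A α ∩ D α) = Cardinal.lift.{1} (Order.succ ρ)
    · exact ⟨A α ∩ D α, Set.inter_subset_left, h1, Or.inl Set.inter_subset_right⟩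
    · refine ⟨A α \ D α, Set.diff_subset, ?_, Or.inr (by ext x; simp)⟩
      have hle : #↥(A α \ D α) ≤ Cardinal.lift.{1} (Order.succ ρ) := by
        rw [← hAsz α hα]; exact Cardinal.mk_le_mk_of_subset Set.diff_subset
      rcases hle.lt_or_eq with hlt | heq
      · exfalso
        have h1' : #↥(A α ∩ D α) < Cardinal.lift.{1} (Order.succ ρ) := by
          refine lt_of_le_of_ne ?_ h1
          rw [← hAsz α hα]; exact Cardinal.mk_le_mk_of_subset Set.inter_subset_left
        have hcover : A α ⊆ (A α ∩ D α) ∪ (A α \ D α) := by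
          intro x hx; by_cases hxD : x ∈ D α
          · exact Or.inl ⟨hx, hxD⟩
          · exact Or.inr ⟨hx, hxD⟩
        have : #↥(A α) < Cardinal.lift.{1} (Order.succ ρ) :=
          lt_of_le_of_lt ((Cardinal.mk_le_mk_of_subset hcover).trans (Cardinal.mk_union_le _ _))
            (Cardinal.add_lt_of_lt hℵ h1' hlt)
        exact absurd (hAsz α hα) this.ne
      · exact heq
  choose! B hB1 hB2 hB3 using hchoice
  -- injectivity
  have hinj : Set.InjOn B S := by
    intro α hα β hβ h
    by_contra hne
    have hsubset : B α ⊆ A α ∩ A β :=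
      Set.subset_inter (hB1 α hα) (h ▸ hB1 β hβ)
    have hlt : #↥(B α) < Cardinal.lift.{1} ρ :=
      lt_of_le_of_lt (Cardinal.mk_le_mk_of_subset hsubset) (had α hα β hβ hne)
    rw [hB2 α hα] at hlt
    exact absurd hlt (not_lt.2 (Cardinal.lift_le.2 (Order.le_succ ρ)))
  -- unboundedness of S
  have hub : ∀ β < κ, ∃ γ ∈ S, β ≤ γ := by
    intro β hβ
    have hclub : IsClubIn κ {γ | β ≤ γ ∧ γ < κ} := by
      refine ⟨fun x hx => hx.2, fun α hα => ⟨max α β, ⟨le_max_right _ _, max_lt hα hβ⟩,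
        le_max_left _ _⟩, fun α hα hlim hcl => ?_⟩
      obtain ⟨γ, hγ, _, hγα⟩ := hcl 0 hlim.pos
      exact ⟨hγ.1.trans hγα.le, hα⟩
    obtain ⟨γ, hγS, hγC⟩ := hS.2 _ hclub
    exact ⟨γ, hγS, hγC.1⟩
  -- cardinality of S
  have hScard : #↥S = Cardinal.lift.{1} κ.card := by
    refine le_antisymm ((Cardinal.mk_le_mk_of_subset hκ0).trans_eq (Ordinal.mk_Iio_ordinal κ)) ?_
    by_contra hlt
    push_neg at hlt
    have hcof : (Ordinal.lift.{1} κ).cof = Cardinal.lift.{1} κ.card := by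
      rw [← Ordinal.lift_cof]
      congr 1
      conv_lhs => rw [hord]
      exact hreg.cof_eq
    have hsup : (⨆ x : ↥S, Ordinal.lift.{1} x.1) < Ordinal.lift.{1} κ := by
      apply Ordinal.iSup_lt_ord_lift.{1,1}
      · rw [hcof]; simpa using hlt
      · exact fun x => Ordinal.lift_lt.2 (hκ0 x.2)
    obtain ⟨β, hβ⟩ := Ordinal.mem_range_lift_of_le hsup.le
    have hβκ : β < κ := by
      rw [← Ordinal.lift_lt.{1}, hβ]; exact hsup
    obtain ⟨γ, hγS, hγ⟩ := hub (β + 1) (hκlim.succ_lt hβκ)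
    have hle : Ordinal.lift.{1} γ ≤ ⨆ x : ↥S, Ordinal.lift.{1} x.1 :=
      Ordinal.le_iSup (fun x : ↥S => Ordinal.lift.{1} x.1) ⟨γ, hγS⟩
    rw [← hβ, Ordinal.lift_le] at hle
    exact absurd (hγ.trans hle) (Order.succ_le_iff.not.2 (by simp))
  refine ⟨B '' S, ?_, ?_, ?_, ?_⟩
  · rw [Cardinal.mk_image_eq_of_injOn B S hinj, hScard]
  · rintro _ ⟨α, hα, rfl⟩
    exact ⟨(hB1 α hα).trans ((hAsub α hα).trans fun x hx => Set.mem_Iio.2 (lt_trans (Set.mem_Iio.1 hx) (hκ0 hα))),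
      hB2 α hα⟩
  · rintro _ ⟨α, hα, rfl⟩ _ ⟨β, hβ, rfl⟩ hne
    have hαβ : α ≠ β := fun h => hne (by rw [h])
    exact lt_of_le_of_lt
      (Cardinal.mk_le_mk_of_subset
        (Set.subset_inter (Set.inter_subset_left.trans (hB1 α hα))
          (Set.inter_subset_right.trans (hB1 β hβ))))
      (had α hα β hβ hαβ)
  · rintro ⟨T, hT⟩
    have hclub : IsClubIn κ (Set.Iio κ) :=
      ⟨subset_rfl, fun α hα => ⟨α, hα, le_rfl⟩, fun α hα _ _ => hα⟩
    obtain ⟨α, hα, -⟩ := (hD2 (T ∩ Set.Iio κ) Set.inter_subset_right).2 (Set.Iio κ) hclub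
    obtain ⟨hαS, hαD⟩ := hα
    have hακ : α < κ := hκ0 hαS
    have hTα : T ∩ Set.Iio α = D α := by
      rw [← hαD]
      ext x
      simp only [Set.mem_inter_iff, Set.mem_Iio]
      exact ⟨fun h => ⟨⟨h.1, h.2.trans hακ⟩, h.2⟩, fun h => ⟨h.1.1, h.2⟩⟩
    obtain ⟨hne, hneq⟩ := hT (B α) ⟨α, hαS, rfl⟩
    have hBα : B α ⊆ Set.Iio α := (hB1 α hαS).trans (hAsub α hαS)
    rcases hB3 α hαS with hsub | hdisj
    · apply hneq
      refine Set.Subset.antisymm Set.inter_subset_left fun x hx => ⟨hx, ?_⟩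
      have : x ∈ T ∩ Set.Iio α := hTα ▸ hsub hx
      exact this.1
    · obtain ⟨x, hxB, hxT⟩ := hne
      have : x ∈ B α ∩ D α := ⟨hxB, hTα ▸ (⟨hxT, hBα hxB⟩ : x ∈ T ∩ Set.Iio α)⟩
      rw [hdisj] at this
      exact this
end

section
/- Assume GCH. If κ is regular, ρ is regular, and there exists a ρ-almost disjoint family A ⊆ [κ]^κ with |A| = κ having no ρ⁺-transversal, then for every cardinal λ with ρ⁺ < λ < κ there exists a ρ-almost disjoint family B ⊆ [κ]^λ with |B| = κ having no ρ⁺-transversal. -/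
/-!
Fix a well-order of type `λ`. By transfinite recursion choose pairwise disjoint sets `X i`,
`i < λ`, each a `ρ⁺⁺`-transversal of `𝒜`: at stage `i` the earlier stages meet every `A ∈ 𝒜` in
at most `λ < κ` points, so the sets `A \ ⋃_{j<i} X j` still form a `ρ`-almost disjoint family in
`[κ]^κ` and the Erdős–Hajnal theorem gives a transversal of them. Then `X = ⋃ i, X i` meets every
`A ∈ 𝒜` in exactly `λ` points, and `{A ∩ X | A ∈ 𝒜}` is the required family: a `ρ⁺`-transversal
`T` of it would make `X ∩ T` a `ρ⁺`-transversal of `𝒜`.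
-/

open Set Cardinal Function

universe u

variable {α : Type u}

def IsAlmostDisjoint (𝒜 : Set (Set α)) (ρ : Cardinal.{u}) : Prop :=
  ∀ A ∈ 𝒜, ∀ B ∈ 𝒜, A ≠ B → #↥(A ∩ B) < ρ

def IsTransversal (𝒜 : Set (Set α)) (μ : Cardinal.{u}) (T : Set α) : Prop :=
  ∀ A ∈ 𝒜, 0 < #↥(A ∩ T) ∧ #↥(A ∩ T) < μ

/-- The arrow relation `M(κ, lam, ρ) → B(μ)` on the ground set `α`. -/
def HasTransversals (α : Type u) (κ lam ρ μ : Cardinal.{u}) : Prop :=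
  ∀ ℱ : Set (Set α), #ℱ = κ → (∀ A ∈ ℱ, #A = lam) → IsAlmostDisjoint ℱ ρ →
    ∃ T, IsTransversal ℱ μ T

namespace IsAlmostDisjoint

variable {𝒜 : Set (Set α)} {ρ : Cardinal.{u}} {f : Set α → Set α}

theorem injOn_of_subset (had : IsAlmostDisjoint 𝒜 ρ) (hf : ∀ A ∈ 𝒜, f A ⊆ A)
    (hρ : ∀ A ∈ 𝒜, ρ ≤ #↥(f A)) : InjOn f 𝒜 := by
  intro A hA B hB hAB
  by_contra hne
  have hsub : f A ⊆ A ∩ B := subset_inter (hf A hA) (hAB ▸ hf B hB)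
  exact ((hρ A hA).trans (mk_le_mk_of_subset hsub)).not_gt (had A hA B hB hne)

theorem image_of_subset (had : IsAlmostDisjoint 𝒜 ρ) (hf : ∀ A ∈ 𝒜, f A ⊆ A) :
    IsAlmostDisjoint (f '' 𝒜) ρ := by
  rintro _ ⟨A, hA, rfl⟩ _ ⟨B, hB, rfl⟩ hne
  exact (mk_le_mk_of_subset (inter_subset_inter (hf A hA) (hf B hB))).trans_lt
    (had A hA B hB (ne_of_apply_ne f hne))

end IsAlmostDisjoint

theorem IsTransversal.of_image_inter {𝒜 : Set (Set α)} {μ : Cardinal.{u}} {X T : Set α}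
    (h : IsTransversal ((· ∩ X) '' 𝒜) μ T) : IsTransversal 𝒜 μ (X ∩ T) := fun A hA => by
  simpa only [inter_assoc] using h _ (mem_image_of_mem _ hA)

theorem Cardinal.mk_diff_eq_of_mk_inter_lt {A P : Set α} (hA : ℵ₀ ≤ #A) (hP : #↥(A ∩ P) < #A) :
    #↥(A \ P) = #A := by
  refine le_antisymm (mk_le_mk_of_subset sdiff_subset) (not_lt.1 fun hlt => ?_)
  have hle := le_mk_sdiff_add_mk A (A ∩ P)
  rw [sdiff_self_inter] at hle
  exact hle.not_gt (add_lt_of_lt hA hlt hP)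

theorem Cardinal.mk_iUnion_eq_of_pairwise_disjoint {ι : Type u} {f : ι → Set α}
    (hf : Pairwise (Disjoint on f)) (hι : ℵ₀ ≤ #ι) (hpos : ∀ i, 0 < #↥(f i))
    (hle : ∀ i, #↥(f i) ≤ #ι) : #↥(⋃ i, f i) = #ι := by
  rw [mk_iUnion_eq_sum_mk hf]
  apply le_antisymm
  · calc sum (fun i => #↥(f i)) ≤ sum fun _ : ι => #ι := sum_le_sum _ _ hle
      _ = #ι := by rw [sum_const', mul_eq_self hι]
  · calc #ι = sum fun _ : ι => (1 : Cardinal) := by simp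
      _ ≤ sum (fun i => #↥(f i)) := sum_le_sum _ _ fun i => Cardinal.one_le_iff_pos.2 (hpos i)

theorem exists_pairwise_disjoint_of_forall_exists {ι : Type*} [LinearOrder ι] [WellFoundedLT ι]
    (p : Set α → Prop)
    (extend : ∀ i : ι, ∀ Y : Iio i → Set α, (∀ j, p (Y j)) → ∃ Z, p Z ∧ ∀ j, Disjoint (Y j) Z) :
    ∃ X : ι → Set α, (∀ i, p (X i)) ∧ Pairwise (Disjoint on X) := by
  classical
  let X : ι → Set α := wellFounded_lt.fix fun i prev =>
    if hp : ∀ j : Iio i, p (prev j j.2) then (extend i _ hp).choose else ∅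
  have hX (i : ι) : X i = if hp : ∀ j : Iio i, p (X j) then (extend i (X ·) hp).choose else ∅ :=
    wellFounded_lt.fix_eq _ i
  have key (i : ι) : p (X i) ∧ ∀ j < i, Disjoint (X j) (X i) := by
    induction i using WellFoundedLT.induction with
    | _ i ih =>
      have hp : ∀ j : Iio i, p (X j) := fun j => (ih j j.2).1
      rw [hX i, dif_pos hp]
      exact ⟨(extend i _ hp).choose_spec.1, fun j hj => (extend i _ hp).choose_spec.2 ⟨j, hj⟩⟩
  refine ⟨X, fun i => (key i).1, fun i j hij => ?_⟩
  rcases hij.lt_or_gt with hlt | hlt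
  · exact (key j).2 i hlt
  · exact ((key i).2 j hlt).symm

section SteppingDown

variable {𝒜 : Set (Set α)} {κ ρ μ : Cardinal.{u}}

theorem exists_isTransversal_disjoint (hκ : ℵ₀ ≤ κ) (hρκ : ρ ≤ κ) (hcard : #𝒜 = κ)
    (hsize : ∀ A ∈ 𝒜, #A = κ) (had : IsAlmostDisjoint 𝒜 ρ) (hEH : HasTransversals α κ κ ρ μ)
    {P : Set α} (hP : ∀ A ∈ 𝒜, #↥(A ∩ P) < κ) : ∃ Y, IsTransversal 𝒜 μ Y ∧ Disjoint P Y := by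
  have hsize' : ∀ A ∈ 𝒜, #↥(A \ P) = κ := fun A hA => by
    rw [← hsize A hA] at hκ hP ⊢
    exact mk_diff_eq_of_mk_inter_lt hκ (hP A hA)
  have hinj : InjOn (· \ P) 𝒜 :=
    had.injOn_of_subset (fun _ _ => sdiff_subset) fun A hA => (hsize' A hA).symm ▸ hρκ
  obtain ⟨T, hT⟩ := hEH ((· \ P) '' 𝒜) (by rw [mk_image_eq_of_injOn _ _ hinj, hcard])
    (by rintro _ ⟨A, hA, rfl⟩; exact hsize' A hA) (had.image_of_subset fun _ _ => sdiff_subset)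
  refine ⟨T \ P, fun A hA => ?_, disjoint_sdiff_right⟩
  rw [← inter_sdiff_assoc, inter_sdiff_right_comm]
  exact hT _ (mem_image_of_mem _ hA)

theorem exists_forall_mk_inter_eq {lam : Cardinal.{u}} (hlam : ℵ₀ ≤ lam) (hlamκ : lam < κ)
    (hρκ : ρ ≤ κ) (hμlam : μ ≤ lam) (hcard : #𝒜 = κ) (hsize : ∀ A ∈ 𝒜, #A = κ)
    (had : IsAlmostDisjoint 𝒜 ρ) (hEH : HasTransversals α κ κ ρ μ) :
    ∃ X : Set α, ∀ A ∈ 𝒜, #↥(A ∩ X) = lam := by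
  obtain ⟨ι, _, _, rfl⟩ : ∃ (ι : Type u) (_ : LinearOrder ι) (_ : WellFoundedLT ι), #ι = lam :=
    ⟨_, inferInstance, inferInstance, mk_ord_toType lam⟩
  have hextend (i : ι) (Y : Iio i → Set α) (hY : ∀ j, IsTransversal 𝒜 μ (Y j)) :
      ∃ Z, IsTransversal 𝒜 μ Z ∧ ∀ j, Disjoint (Y j) Z := by
    have hsmall : ∀ A ∈ 𝒜, #↥(A ∩ ⋃ j, Y j) < κ := fun A hA => by
      rw [inter_iUnion]
      refine (mk_iUnion_le _).trans_lt (lt_of_le_of_lt ?_ hlamκ)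
      exact mul_le_of_le hlam (mk_set_le _) (ciSup_le' fun j => ((hY j A hA).2.trans_le hμlam).le)
    obtain ⟨Z, hZ, hdisj⟩ :=
      exists_isTransversal_disjoint (hlam.trans hlamκ.le) hρκ hcard hsize had hEH hsmall
    exact ⟨Z, hZ, fun j => hdisj.mono_left (subset_iUnion Y j)⟩
  obtain ⟨X, hXT, hXdisj⟩ := exists_pairwise_disjoint_of_forall_exists _ hextend
  refine ⟨⋃ i, X i, fun A hA => ?_⟩
  rw [inter_iUnion]
  exact mk_iUnion_eq_of_pairwise_disjoint
    (fun i j hij => (hXdisj hij).mono inter_subset_right inter_subset_right) hlam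
    (fun i => (hXT i A hA).1) fun i => ((hXT i A hA).2.trans_le hμlam).le

end SteppingDown

theorem stmt16_general {α : Type u} (κ ρ : Cardinal.{u})
    (hρ : ρ.IsRegular)
    (h1 : ∃ 𝒜 : Set (Set α), #↥𝒜 = κ ∧ (∀ A ∈ 𝒜, #↥A = κ) ∧
      (∀ A ∈ 𝒜, ∀ B ∈ 𝒜, A ≠ B → #↥(A ∩ B) < ρ) ∧
      ¬ ∃ T : Set α, ∀ A ∈ 𝒜, 0 < #↥(A ∩ T) ∧ #↥(A ∩ T) < Order.succ ρ)
    (hEH : ∀ lam : Cardinal.{u}, ∀ ℱ : Set (Set α), #↥ℱ = κ → (∀ A ∈ ℱ, #↥A = lam) →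
      (∀ A ∈ ℱ, ∀ B ∈ ℱ, A ≠ B → #↥(A ∩ B) < ρ) →
      ∃ T : Set α, ∀ A ∈ ℱ, 0 < #↥(A ∩ T) ∧ #↥(A ∩ T) < Order.succ (Order.succ ρ)) :
    ∀ lam : Cardinal.{u}, Order.succ ρ < lam → lam < κ →
      ∃ ℬ : Set (Set α), #↥ℬ = κ ∧ (∀ B ∈ ℬ, #↥B = lam) ∧
        (∀ B ∈ ℬ, ∀ B' ∈ ℬ, B ≠ B' → #↥(B ∩ B') < ρ) ∧
        ¬ ∃ T : Set α, ∀ B ∈ ℬ, 0 < #↥(B ∩ T) ∧ #↥(B ∩ T) < Order.succ ρ := by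
  intro lam hsl hlamκ
  obtain ⟨𝒜, hcard, hsize, had, hno⟩ := h1
  have had : IsAlmostDisjoint 𝒜 ρ := had
  have hρlam : ρ < lam := (Order.lt_succ ρ).trans hsl
  obtain ⟨X, hX⟩ := exists_forall_mk_inter_eq (hρ.aleph0_le.trans hρlam.le) hlamκ
    (hρlam.trans hlamκ).le (Order.succ_le_of_lt hsl) hcard hsize had (hEH κ)
  have hinj : InjOn (· ∩ X) 𝒜 :=
    had.injOn_of_subset (fun _ _ => inter_subset_left) fun A hA => (hX A hA).symm ▸ hρlam.le
  refine ⟨(· ∩ X) '' 𝒜, by rw [mk_image_eq_of_injOn _ _ hinj, hcard], ?_,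
    had.image_of_subset fun _ _ => inter_subset_left, fun ⟨T, hT⟩ => hno ⟨X ∩ T, ?_⟩⟩
  · rintro _ ⟨A, hA, rfl⟩
    exact hX A hA
  · exact IsTransversal.of_image_inter hT

/-- (GCH) if M(κ,κ,ρ) ↛ B(ρ⁺) then M(κ,λ,ρ) ↛ B(ρ⁺) for all ρ⁺ < λ < κ.
The Erdős–Hajnal theorem M(κ,λ,ρ) → B(ρ⁺⁺) is taken as the hypothesis `hEH`. -/
theorem stmt16 {α : Type u} (κ ρ : Cardinal.{u})
    (hGCH : ∀ c : Cardinal.{u}, ℵ₀ ≤ c → 2 ^ c = Order.succ c)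
    (hκ : κ.IsRegular) (hρ : ρ.IsRegular) (hα : #α = κ)
    (h1 : ∃ 𝒜 : Set (Set α), #↥𝒜 = κ ∧ (∀ A ∈ 𝒜, #↥A = κ) ∧
      (∀ A ∈ 𝒜, ∀ B ∈ 𝒜, A ≠ B → #↥(A ∩ B) < ρ) ∧
      ¬ ∃ T : Set α, ∀ A ∈ 𝒜, 0 < #↥(A ∩ T) ∧ #↥(A ∩ T) < Order.succ ρ)
    (hEH : ∀ lam : Cardinal.{u}, ∀ ℱ : Set (Set α), #↥ℱ = κ → (∀ A ∈ ℱ, #↥A = lam) →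
      (∀ A ∈ ℱ, ∀ B ∈ ℱ, A ≠ B → #↥(A ∩ B) < ρ) →
      ∃ T : Set α, ∀ A ∈ ℱ, 0 < #↥(A ∩ T) ∧ #↥(A ∩ T) < Order.succ (Order.succ ρ)) :
    ∀ lam : Cardinal.{u}, Order.succ ρ < lam → lam < κ →
      ∃ ℬ : Set (Set α), #↥ℬ = κ ∧ (∀ B ∈ ℬ, #↥B = lam) ∧
        (∀ B ∈ ℬ, ∀ B' ∈ ℬ, B ≠ B' → #↥(B ∩ B') < ρ) ∧
        ¬ ∃ T : Set α, ∀ B ∈ ℬ, 0 < #↥(B ∩ T) ∧ #↥(B ∩ T) < Order.succ ρ :=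
  stmt16_general κ ρ hρ h1 hEH
end

section
/- Let χ be a regular cardinal, μ⁺ < χ, S ⊆ χ stationary consisting of ordinals of cofinality μ⁺, and ⟨Y_δ : δ ∈ S⟩ a family with Y_δ ⊆ χ, |Y_δ| = μ⁺, sup Y_δ = δ. Suppose ⟨f_δ : δ ∈ S⟩ is a sequence with f_δ : Y_δ → Y_δ such that for every f : χ → χ the set {δ ∈ S : f_δ ⊆ f} is stationary in χ, and that the Y_δ are μ-almost disjoint. Let S* = {δ ∈ S : f_δ is strictly increasing} and Z_δ = f_δ''Y_δ with Z_δ ⊆ Y_δ's ambient model so that the Z_δ are μ-almost disjoint. Then {Z_δ : δ ∈ S*} is a Stick(χ, μ⁺, μ)-family: for every Z ∈ [χ]^χ there is δ ∈ S* with Z_δ ⊆ Z. -/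
open Set Cardinal Ordinal

/-- the guessing sequence `⟨f_δ⟩` yields a Stick(χ,μ⁺,μ)-family
`{f_δ '' Y_δ : δ ∈ S*}` where `S* = {δ ∈ S : f_δ strictly increasing}`. -/
theorem stmt17 (χ : Ordinal.{0}) (μ : Cardinal.{0})
    (hreg : χ.card.IsRegular) (hord : χ = χ.card.ord)
    (hμ : ℵ₀ ≤ μ) (hμχ : Order.succ μ < χ.card)
    (S : Set Ordinal) (hS : IsStationaryIn χ S)
    (hcof : ∀ δ ∈ S, δ.cof = Order.succ μ)
    (Y : Ordinal → Set Ordinal)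
    (hY : ∀ δ ∈ S, Y δ ⊆ Set.Iio χ ∧ #↥(Y δ) = Cardinal.lift.{1} (Order.succ μ) ∧
      sSup (Y δ) = δ)
    (had : ∀ δ ∈ S, ∀ δ' ∈ S, δ ≠ δ' → #↥(Y δ ∩ Y δ') < Cardinal.lift.{1} μ)
    (f : Ordinal → Ordinal → Ordinal)
    (hf : ∀ δ ∈ S, ∀ x ∈ Y δ, f δ x ∈ Y δ)
    (hstat : ∀ g : Ordinal → Ordinal, (∀ x < χ, g x < χ) →
      IsStationaryIn χ {δ ∈ S | ∀ x ∈ Y δ, f δ x = g x}) :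
    (∀ δ ∈ S, StrictMonoOn (f δ) (Y δ) →
      #↥(f δ '' Y δ) = Cardinal.lift.{1} (Order.succ μ)) ∧
    (∀ δ ∈ S, ∀ δ' ∈ S, δ ≠ δ' → #↥((f δ '' Y δ) ∩ (f δ' '' Y δ')) < Cardinal.lift.{1} μ) ∧
    (∀ Z : Set Ordinal, Z ⊆ Set.Iio χ → #↥Z = Cardinal.lift.{1} χ.card →
      ∃ δ ∈ S, StrictMonoOn (f δ) (Y δ) ∧ f δ '' Y δ ⊆ Z) := by
  refine ⟨?_, ?_, ?_⟩
  · intro δ hδ hmono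
    rw [Cardinal.mk_image_eq_of_injOn _ _ hmono.injOn]
    exact (hY δ hδ).2.1
  · intro δ hδ δ' hδ' hne
    refine lt_of_le_of_lt (Cardinal.mk_le_mk_of_subset ?_) (had δ hδ δ' hδ' hne)
    rintro x ⟨⟨a, ha, rfl⟩, ⟨b, hb, hba⟩⟩
    exact ⟨hf δ hδ a ha, hba ▸ hf δ' hδ' b hb⟩
  · intro Z hZχ hZcard
    set s : Set Ordinal := Z ∪ Set.Ici χ with hs_def
    have hs : ¬ BddAbove s := by
      intro ⟨b, hb⟩
      have h1 : max b χ + 1 ∈ s := Or.inr (Set.mem_Ici.mpr (le_trans (le_max_right _ _) (le_of_lt (lt_add_one _))))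
      have h2 := hb h1
      exact absurd ((le_max_left b χ).trans_lt (lt_add_one _)) (not_lt.mpr h2)
    set g := enumOrd s with hg_def
    have key : ∀ x < χ, g x ∈ Z := by
      intro x hx
      rcases enumOrd_mem hs x with h | h
      · exact h
      · exfalso
        have hsub : Z ⊆ g '' Set.Iio x := by
          intro z hz
          obtain ⟨y, hy⟩ := (range_enumOrd hs ▸ Set.mem_union_left _ hz : z ∈ Set.range g)
          refine ⟨y, ?_, hy⟩
          have : g y < g x := lt_of_lt_of_le (by show enumOrd s y < χ; rw [hy]; exact hZχ hz) h
          exact (enumOrd_strictMono hs).lt_iff_lt.mp this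
        have hle : #↥Z ≤ Cardinal.lift.{1} x.card := by
          calc #↥Z ≤ #↥(g '' Set.Iio x) := Cardinal.mk_le_mk_of_subset hsub
            _ ≤ #↥(Set.Iio x) := Cardinal.mk_image_le
            _ = Cardinal.lift.{1} x.card := Ordinal.mk_Iio_ordinal x
        rw [hZcard] at hle
        have : χ.card ≤ x.card := Cardinal.lift_le.mp hle
        exact absurd (((Cardinal.lt_ord.mp (hord ▸ hx))).trans_le this) (lt_irrefl _)
    have hglt : ∀ x < χ, g x < χ := fun x hx => hZχ (key x hx)
    obtain ⟨δ, hδ⟩ := (hstat g hglt).2 (Set.Iio χ)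
      ⟨fun _ h => h, fun α hα => ⟨α, hα, le_refl _⟩, fun α hα _ _ => hα⟩
    obtain ⟨⟨hδS, hδg⟩, _⟩ := hδ
    refine ⟨δ, hδS, ?_, ?_⟩
    · intro a ha b hb hab
      rw [hδg a ha, hδg b hb]
      exact enumOrd_strictMono hs hab
    · rintro _ ⟨x, hx, rfl⟩
      rw [hδg x hx]
      exact key x ((hY δ hδS).1 hx)
end
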